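/- arXiv:1712.07528 — 2 statements merged into one kernel-verified Lean document; each statement's English description precedes it below -/
import Mathlib

section
/- Lipschitz cone extension into Wasserstein space: let B(0,1) be the closed unit ball of ℝ^p with boundary S^{p-1}, let μ_l : S^{p-1} → P(D) be a Lipschitz map into the Wasserstein space over a compact convex D ⊂ ℝ^q, and fix x₀ ∈ D. For r ∈ [0,1] define T_r(x) = r·x + (1-r)·x₀. Then the map μ defined on the ball by μ(r·ξ) := (T_r)_# (μ_l(ξ)) for ξ ∈ S^{p-1}, r ∈ [0,1], is Lipschitz from B(0,1) to (P(D), W₂). -/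
open MeasureTheory

/-- The squared quadratic Wasserstein distance, defined via couplings. -/
noncomputable def W2sq {X : Type*} [MeasurableSpace X] [PseudoMetricSpace X]
    (μ ν : Measure X) : ℝ :=
  sInf { r : ℝ | ∃ π : Measure (X × X), IsProbabilityMeasure π ∧
    π.map Prod.fst = μ ∧ π.map Prod.snd = ν ∧ r = ∫ z, dist z.1 z.2 ^ 2 ∂π }

/-- The quadratic Wasserstein distance. -/
noncomputable def W2 {X : Type*} [MeasurableSpace X] [PseudoMetricSpace X]
    (μ ν : Measure X) : ℝ := Real.sqrt (W2sq μ ν)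

lemma W2sq_bddBelow {X : Type*} [MeasurableSpace X] [PseudoMetricSpace X] (μ ν : Measure X) :
    BddBelow { r : ℝ | ∃ π : Measure (X × X), IsProbabilityMeasure π ∧
      π.map Prod.fst = μ ∧ π.map Prod.snd = ν ∧ r = ∫ z, dist z.1 z.2 ^ 2 ∂π } := by
  refine ⟨0, ?_⟩
  rintro r ⟨π, hπ, h1, h2, rfl⟩
  exact integral_nonneg fun z => by positivity

lemma W2sq_nonneg {X : Type*} [MeasurableSpace X] [PseudoMetricSpace X] (μ ν : Measure X) :
    0 ≤ W2sq μ ν := by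
  apply Real.sInf_nonneg
  rintro r ⟨π, hπ, h1, h2, rfl⟩
  exact integral_nonneg fun z => by positivity

lemma W2sq_nonempty {X : Type*} [MeasurableSpace X] [PseudoMetricSpace X] (μ ν : Measure X)
    [IsProbabilityMeasure μ] [IsProbabilityMeasure ν] :
    { r : ℝ | ∃ π : Measure (X × X), IsProbabilityMeasure π ∧
      π.map Prod.fst = μ ∧ π.map Prod.snd = ν ∧ r = ∫ z, dist z.1 z.2 ^ 2 ∂π }.Nonempty := by
  refine ⟨_, μ.prod ν, inferInstance, ?_, ?_, rfl⟩
  · simp [Measure.map_fst_prod, measure_univ]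
  · simp [Measure.map_snd_prod, measure_univ]

lemma W2sq_le_of_coupling {X : Type*} [MeasurableSpace X] [PseudoMetricSpace X]
    {μ ν : Measure X} (π : Measure (X × X)) (hπ : IsProbabilityMeasure π)
    (h1 : π.map Prod.fst = μ) (h2 : π.map Prod.snd = ν) :
    W2sq μ ν ≤ ∫ z, dist z.1 z.2 ^ 2 ∂π :=
  csInf_le (W2sq_bddBelow μ ν) ⟨π, hπ, h1, h2, rfl⟩

lemma W2_sq_eq {X : Type*} [MeasurableSpace X] [PseudoMetricSpace X] (μ ν : Measure X) :
    W2 μ ν ^ 2 = W2sq μ ν := Real.sq_sqrt (W2sq_nonneg μ ν)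

section Key
variable {q : ℕ}
local notation "X" => EuclideanSpace ℝ (Fin q)

lemma pointwise_est (x₀ : X) (M r s : ℝ) {x y : X}
    (hyx : ‖y - x₀‖ ≤ M) (hr0 : 0 ≤ r) :
    dist (r • x + (1 - r) • x₀) (s • y + (1 - s) • x₀) ^ 2
      ≤ 2 * r ^ 2 * dist x y ^ 2 + 2 * M ^ 2 * (r - s) ^ 2 := by
  have hdec : (r • x + (1 - r) • x₀) - (s • y + (1 - s) • x₀)
      = r • (x - y) + (r - s) • (y - x₀) := by
    simp only [smul_sub, sub_smul, one_smul]
    abel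
  have h1 : dist (r • x + (1 - r) • x₀) (s • y + (1 - s) • x₀)
      ≤ r * ‖x - y‖ + |r - s| * ‖y - x₀‖ := by
    rw [dist_eq_norm, hdec]
    refine (norm_add_le _ _).trans ?_
    rw [norm_smul, norm_smul, Real.norm_eq_abs, Real.norm_eq_abs, abs_of_nonneg hr0]
  have h2 : r * ‖x - y‖ + |r - s| * ‖y - x₀‖ ≤ r * dist x y + |r - s| * M := by
    rw [dist_eq_norm]
    have := abs_nonneg (r - s)
    nlinarith [norm_nonneg (y - x₀)]
  have hd := dist_nonneg (x := r • x + (1 - r) • x₀) (y := s • y + (1 - s) • x₀)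
  have h3 := h1.trans h2
  have h4 : dist (r • x + (1 - r) • x₀) (s • y + (1 - s) • x₀) ^ 2
      ≤ (r * dist x y + |r - s| * M) ^ 2 := by
    have := pow_le_pow_left₀ hd h3 2
    simpa using this
  refine h4.trans ?_
  have habs : |r - s| ^ 2 = (r - s) ^ 2 := sq_abs _
  nlinarith [sq_nonneg (r * dist x y - |r - s| * M)]

set_option maxHeartbeats 1000000 in
lemma key_est (Ds : Set X) (hDm : MeasurableSet Ds) (hDconv : Convex ℝ Ds)
    (x₀ : X) (hx₀ : x₀ ∈ Ds) (M : ℝ) (hM0 : 0 ≤ M)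
    (hMd : ∀ x ∈ Ds, ∀ y ∈ Ds, dist x y ≤ M)
    (ν₁ ν₂ : Measure X) [IsProbabilityMeasure ν₁] [IsProbabilityMeasure ν₂]
    (hs1 : ν₁ Dsᶜ = 0) (hs2 : ν₂ Dsᶜ = 0)
    (r s : ℝ) (hr01 : r ∈ Set.Icc (0:ℝ) 1) (hs01 : s ∈ Set.Icc (0:ℝ) 1) :
    W2sq (ν₁.map (fun x => r • x + (1 - r) • x₀)) (ν₂.map (fun x => s • x + (1 - s) • x₀))
      ≤ 2 * r ^ 2 * W2sq ν₁ ν₂ + 2 * M ^ 2 * (r - s) ^ 2 := by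
  obtain ⟨hr0, hr1⟩ := hr01
  obtain ⟨hs0, hs1'⟩ := hs01
  set Tr : X → X := fun x => r • x + (1 - r) • x₀ with hTr
  set Ts : X → X := fun x => s • x + (1 - s) • x₀ with hTs
  have hTrc : Continuous Tr := by fun_prop
  have hTsc : Continuous Ts := by fun_prop
  have hTrD : ∀ x ∈ Ds, Tr x ∈ Ds := fun x hx => hDconv hx hx₀ hr0 (by linarith) (by ring)
  have hTsD : ∀ x ∈ Ds, Ts x ∈ Ds := fun x hx => hDconv hx hx₀ hs0 (by linarith) (by ring)
  refine le_of_forall_pos_le_add fun ε hε => ?_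
  -- pick a near-optimal coupling
  obtain ⟨a, ⟨π, hπ, hπ1, hπ2, rfl⟩, ha⟩ :=
    Real.lt_sInf_add_pos (W2sq_nonempty ν₁ ν₂) (show (0:ℝ) < ε / 2 by linarith)
  -- a.e. concentration on Ds × Ds
  have haefst : ∀ᵐ z : X × X ∂π, z.1 ∈ Ds := by
    rw [ae_iff]
    have : {z : X × X | ¬ z.1 ∈ Ds} = Prod.fst ⁻¹' Dsᶜ := rfl
    rw [this, ← Measure.map_apply measurable_fst hDm.compl, hπ1, hs1]
  have haesnd : ∀ᵐ z : X × X ∂π, z.2 ∈ Ds := by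
    rw [ae_iff]
    have : {z : X × X | ¬ z.2 ∈ Ds} = Prod.snd ⁻¹' Dsᶜ := rfl
    rw [this, ← Measure.map_apply measurable_snd hDm.compl, hπ2, hs2]
  have hae : ∀ᵐ z : X × X ∂π, z.1 ∈ Ds ∧ z.2 ∈ Ds := haefst.and haesnd
  -- the pushforward coupling
  set g : X × X → X × X := Prod.map Tr Ts with hg
  have hgm : Measurable g := (hTrc.prodMap hTsc).measurable
  have hπ' : IsProbabilityMeasure (π.map g) := Measure.isProbabilityMeasure_map hgm.aemeasurable
  have hmap1 : (π.map g).map Prod.fst = ν₁.map Tr := by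
    rw [Measure.map_map measurable_fst hgm]
    have : (Prod.fst ∘ g) = Tr ∘ Prod.fst := rfl
    rw [this, ← Measure.map_map hTrc.measurable measurable_fst, hπ1]
  have hmap2 : (π.map g).map Prod.snd = ν₂.map Ts := by
    rw [Measure.map_map measurable_snd hgm]
    have : (Prod.snd ∘ g) = Ts ∘ Prod.snd := rfl
    rw [this, ← Measure.map_map hTsc.measurable measurable_snd, hπ2]
  have hint_eq : ∫ z, dist z.1 z.2 ^ 2 ∂(π.map g) = ∫ z, dist (Tr z.1) (Ts z.2) ^ 2 ∂π := by
    rw [integral_map hgm.aemeasurable]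
    · rfl
    · exact (Continuous.aestronglyMeasurable (by fun_prop))
  have hle := W2sq_le_of_coupling (π.map g) hπ' hmap1 hmap2
  rw [hint_eq] at hle
  -- integrability
  have hcont1 : Continuous fun z : X × X => dist (Tr z.1) (Ts z.2) ^ 2 := by fun_prop
  have hint1 : Integrable (fun z : X × X => dist (Tr z.1) (Ts z.2) ^ 2) π := by
    refine (integrable_const (M ^ 2)).mono' hcont1.aestronglyMeasurable ?_
    filter_upwards [hae] with z hz
    rw [Real.norm_eq_abs, abs_of_nonneg (by positivity)]
    have := hMd _ (hTrD _ hz.1) _ (hTsD _ hz.2)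
    nlinarith [dist_nonneg (x := Tr z.1) (y := Ts z.2)]
  have hint2 : Integrable (fun z : X × X => dist z.1 z.2 ^ 2) π := by
    refine (integrable_const (M ^ 2)).mono'
      (Continuous.aestronglyMeasurable (by fun_prop)) ?_
    filter_upwards [hae] with z hz
    rw [Real.norm_eq_abs, abs_of_nonneg (by positivity)]
    have := hMd _ hz.1 _ hz.2
    nlinarith [dist_nonneg (x := z.1) (y := z.2)]
  have hmono : ∫ z, dist (Tr z.1) (Ts z.2) ^ 2 ∂π
      ≤ ∫ z, (2 * r ^ 2 * dist z.1 z.2 ^ 2 + 2 * M ^ 2 * (r - s) ^ 2) ∂π := by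
    refine integral_mono_ae hint1 ((hint2.const_mul _).add (integrable_const _)) ?_
    filter_upwards [hae] with z hz
    have := hMd _ hz.2 _ hx₀
    exact pointwise_est x₀ M r s (by rw [← dist_eq_norm]; exact this) hr0
  have hintval : ∫ z, (2 * r ^ 2 * dist z.1 z.2 ^ 2 + 2 * M ^ 2 * (r - s) ^ 2) ∂π
      = 2 * r ^ 2 * (∫ z, dist z.1 z.2 ^ 2 ∂π) + 2 * M ^ 2 * (r - s) ^ 2 := by
    rw [integral_add (hint2.const_mul _) (integrable_const _), integral_const,
      integral_const_mul]
    simp [measure_univ]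
  have hW : W2sq ν₁ ν₂ = sInf _ := rfl
  have hπint : ∫ z, dist z.1 z.2 ^ 2 ∂π ≤ W2sq ν₁ ν₂ + ε / 2 := le_of_lt ha
  calc W2sq (ν₁.map Tr) (ν₂.map Ts)
      ≤ 2 * r ^ 2 * (∫ z, dist z.1 z.2 ^ 2 ∂π) + 2 * M ^ 2 * (r - s) ^ 2 := by
        rw [← hintval]; exact hle.trans hmono
    _ ≤ 2 * r ^ 2 * (W2sq ν₁ ν₂ + ε / 2) + 2 * M ^ 2 * (r - s) ^ 2 := by
        have h2 : (0:ℝ) ≤ 2 * r ^ 2 := by positivity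
        nlinarith
    _ ≤ 2 * r ^ 2 * W2sq ν₁ ν₂ + 2 * M ^ 2 * (r - s) ^ 2 + ε := by
        have hr2 : r ^ 2 ≤ 1 := by nlinarith
        nlinarith [mul_le_of_le_one_left hε.le hr2]

end Key

set_option maxHeartbeats 1000000 in
/-- Lipschitz cone extension into the Wasserstein space: given a Lipschitz map
`μ_l : S^{p-1} → P(D)` and `x₀ ∈ D`, the map `μ(r·ξ) := (T_r)_#(μ_l ξ)` with
`T_r x = r·x + (1-r)·x₀` is Lipschitz on the closed unit ball of `ℝ^p`. -/
theorem lipschitz_cone_extension (p q : ℕ) (hp : 0 < p)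
    (Ds : Set (EuclideanSpace ℝ (Fin q))) (hD : IsCompact Ds) (hDconv : Convex ℝ Ds)
    (x₀ : EuclideanSpace ℝ (Fin q)) (hx₀ : x₀ ∈ Ds)
    (μl : EuclideanSpace ℝ (Fin p) → Measure (EuclideanSpace ℝ (Fin q)))
    (hprob : ∀ ξ ∈ Metric.sphere (0 : EuclideanSpace ℝ (Fin p)) 1,
      IsProbabilityMeasure (μl ξ))
    (hsupp : ∀ ξ ∈ Metric.sphere (0 : EuclideanSpace ℝ (Fin p)) 1, μl ξ Dsᶜ = 0)
    (L : ℝ)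
    (hL : ∀ ξ ∈ Metric.sphere (0 : EuclideanSpace ℝ (Fin p)) 1,
      ∀ η ∈ Metric.sphere (0 : EuclideanSpace ℝ (Fin p)) 1,
        W2 (μl ξ) (μl η) ≤ L * ‖ξ - η‖)
    (μ : EuclideanSpace ℝ (Fin p) → Measure (EuclideanSpace ℝ (Fin q)))
    (hdef : ∀ ξ ∈ Metric.sphere (0 : EuclideanSpace ℝ (Fin p)) 1, ∀ r ∈ Set.Icc (0:ℝ) 1,
      μ (r • ξ) = (μl ξ).map (fun x => r • x + (1 - r) • x₀)) :
    ∃ K : ℝ, ∀ ζ ∈ Metric.closedBall (0 : EuclideanSpace ℝ (Fin p)) 1,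
      ∀ ζ' ∈ Metric.closedBall (0 : EuclideanSpace ℝ (Fin p)) 1,
        W2 (μ ζ) (μ ζ') ≤ K * ‖ζ - ζ'‖ := by
  -- diameter bound for Ds
  obtain ⟨M, hMd⟩ := Metric.isBounded_iff.mp hD.isBounded
  have hM0 : 0 ≤ M := le_trans (by simp) (hMd hx₀ hx₀)
  have hDm : MeasurableSet Ds := hD.isClosed.measurableSet
  -- a unit vector
  set e : EuclideanSpace ℝ (Fin p) := EuclideanSpace.single ⟨0, hp⟩ 1 with he
  have hene : ‖e‖ = 1 := by simp [he]
  -- representation of points in the ball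
  have hrep : ∀ ζ ∈ Metric.closedBall (0 : EuclideanSpace ℝ (Fin p)) 1,
      ∃ ξ, ξ ∈ Metric.sphere (0 : EuclideanSpace ℝ (Fin p)) 1 ∧
        ‖ζ‖ ∈ Set.Icc (0:ℝ) 1 ∧ ζ = ‖ζ‖ • ξ := by
    intro ζ hζ
    rw [Metric.mem_closedBall, dist_zero_right] at hζ
    by_cases h0 : ζ = 0
    · exact ⟨e, by simp [mem_sphere_zero_iff_norm, hene], by simp [h0], by simp [h0]⟩
    · refine ⟨‖ζ‖⁻¹ • ζ, ?_, ⟨norm_nonneg _, hζ⟩, ?_⟩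
      · rw [mem_sphere_zero_iff_norm, norm_smul, norm_inv, norm_norm,
          inv_mul_cancel₀ (norm_ne_zero_iff.mpr h0)]
      · rw [smul_smul, mul_inv_cancel₀ (norm_ne_zero_iff.mpr h0), one_smul]
  refine ⟨Real.sqrt (8 * L ^ 2 + 2 * M ^ 2), fun ζ hζ ζ' hζ' => ?_⟩
  obtain ⟨ξ, hξ, hr01, hζeq⟩ := hrep ζ hζ
  obtain ⟨η, hη, hs01, hζ'eq⟩ := hrep ζ' hζ'
  set r := ‖ζ‖
  set s := ‖ζ'‖
  have hμζ : μ ζ = (μl ξ).map (fun x => r • x + (1 - r) • x₀) := by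
    rw [hζeq]; exact hdef ξ hξ r hr01
  have hμζ' : μ ζ' = (μl η).map (fun x => s • x + (1 - s) • x₀) := by
    rw [hζ'eq]; exact hdef η hη s hs01
  haveI := hprob ξ hξ
  haveI := hprob η hη
  have hkey := key_est Ds hDm hDconv x₀ hx₀ M hM0 (fun x hx y hy => hMd hx hy)
    (μl ξ) (μl η) (hsupp ξ hξ) (hsupp η hη) r s hr01 hs01
  -- W2sq of the boundary measures
  have hWl : W2sq (μl ξ) (μl η) ≤ (L * ‖ξ - η‖) ^ 2 := by
    rw [← W2_sq_eq]
    exact pow_le_pow_left₀ (Real.sqrt_nonneg _) (hL ξ hξ η hη) 2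
  -- geometric estimates
  have hξn : ‖ξ‖ = 1 := mem_sphere_zero_iff_norm.mp hξ
  have hηn : ‖η‖ = 1 := mem_sphere_zero_iff_norm.mp hη
  have hdr : |r - s| ≤ ‖ζ - ζ'‖ := abs_norm_sub_norm_le ζ ζ'
  have hrd : r * ‖ξ - η‖ ≤ 2 * ‖ζ - ζ'‖ := by
    have hdecomp : r • (ξ - η) = (ζ - ζ') - (r - s) • η := by
      rw [hζeq, hζ'eq]; module
    have h1 : ‖r • (ξ - η)‖ ≤ ‖ζ - ζ'‖ + ‖(r - s) • η‖ := by
      rw [hdecomp]; exact norm_sub_le _ _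
    rw [norm_smul, norm_smul, Real.norm_eq_abs, Real.norm_eq_abs,
      abs_of_nonneg (norm_nonneg ζ), hηn, mul_one] at h1
    linarith
  -- combine
  have hsq : W2sq (μ ζ) (μ ζ') ≤ (8 * L ^ 2 + 2 * M ^ 2) * ‖ζ - ζ'‖ ^ 2 := by
    rw [hμζ, hμζ']
    refine hkey.trans ?_
    have e1 : 2 * r ^ 2 * W2sq (μl ξ) (μl η) ≤ 2 * r ^ 2 * (L * ‖ξ - η‖) ^ 2 := by
      have : (0:ℝ) ≤ 2 * r ^ 2 := by positivity
      nlinarith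
    have e2 : 2 * r ^ 2 * (L * ‖ξ - η‖) ^ 2 ≤ 8 * L ^ 2 * ‖ζ - ζ'‖ ^ 2 := by
      have h1 : (r * ‖ξ - η‖) ^ 2 ≤ (2 * ‖ζ - ζ'‖) ^ 2 := by
        have hrn : 0 ≤ r * ‖ξ - η‖ := mul_nonneg hr01.1 (norm_nonneg _)
        nlinarith
      nlinarith [sq_nonneg L, sq_nonneg (r * ‖ξ - η‖)]
    have e3 : 2 * M ^ 2 * (r - s) ^ 2 ≤ 2 * M ^ 2 * ‖ζ - ζ'‖ ^ 2 := by
      have h1 : (r - s) ^ 2 ≤ ‖ζ - ζ'‖ ^ 2 := by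
        rw [← sq_abs (r - s)]
        exact pow_le_pow_left₀ (abs_nonneg _) hdr 2
      nlinarith [sq_nonneg M]
    linarith
  have hKnn : (0:ℝ) ≤ 8 * L ^ 2 + 2 * M ^ 2 := by positivity
  calc W2 (μ ζ) (μ ζ') = Real.sqrt (W2sq (μ ζ) (μ ζ')) := rfl
    _ ≤ Real.sqrt ((8 * L ^ 2 + 2 * M ^ 2) * ‖ζ - ζ'‖ ^ 2) := Real.sqrt_le_sqrt hsq
    _ = Real.sqrt (8 * L ^ 2 + 2 * M ^ 2) * ‖ζ - ζ'‖ := by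
        rw [Real.sqrt_mul hKnn, Real.sqrt_sq (norm_nonneg _)]
end

section
/- Closedness of boundary-value-constrained sublevel sets: fix μ_b ∈ H¹(Ω, P(D)) and C ∈ ℝ. The set {μ ∈ H¹(Ω,P(D)) : BT_μ = BT_{μ_b} and Dir(μ) ≤ C} is closed for the weak topology on L²(Ω, P(D)) (i.e. weak convergence of the corresponding probability measures on Ω×D). -/
open MeasureTheory RealInnerProductSpace

noncomputable section

abbrev E1 (p : ℕ) : Type := EuclideanSpace ℝ (Fin p)
abbrev E2 (q : ℕ) : Type := EuclideanSpace ℝ (Fin q)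
abbrev Zsp (p q : ℕ) : Type := E1 p × E2 q
abbrev Vsp (p q : ℕ) : Type := Fin p → E2 q

/-- Squared Hilbert–Schmidt norm of an element of `ℝ^{pq}`. -/
def normSqV {p q : ℕ} (v : Vsp p q) : ℝ := ∑ α, ‖v α‖ ^ 2

/-- Euclidean pairing on `ℝ^{pq}`. -/
def pairV {p q : ℕ} (b w : Vsp p q) : ℝ := ∑ α, ⟪b α, w α⟫

/-- Divergence with respect to the `Ω` variables of an `ℝ^p`-valued function on `Ω × D`. -/
def divOmega {p q : ℕ} (φ : Zsp p q → E1 p) (z : Zsp p q) : ℝ :=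
  ∑ α, fderiv ℝ φ z (EuclideanSpace.single α (1:ℝ), 0) α

/-- Gradient with respect to the `D` variables of an `ℝ^p`-valued function on `Ω × D`,
viewed as an element of `ℝ^{pq}`. -/
def gradD {p q : ℕ} (φ : Zsp p q → E1 p) (z : Zsp p q) : Vsp p q := fun α =>
  ∑ i, EuclideanSpace.single i (fderiv ℝ φ z ((0 : E1 p), EuclideanSpace.single i (1:ℝ)) α)

/-- `μ` represents an element of `L²(Ω, P(D))`: a probability measure on `Ω × D` whose
first marginal is the Lebesgue measure on `Ω` and whose second coordinate lies in `D`. -/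
def RepMap {p q : ℕ} (Ωs : Set (E1 p)) (Ds : Set (E2 q)) (μ : Measure (Zsp p q)) : Prop :=
  IsProbabilityMeasure μ ∧ μ.map Prod.fst = volume.restrict Ωs ∧
    μ {z : Zsp p q | z.2 ∉ Ds} = 0

/-- `(σ, w)` represents a finite-mass `ℝ^{pq}`-valued vector measure `E = w·σ` on `Ω × D`. -/
def Momentum {p q : ℕ} (Ωs : Set (E1 p)) (Ds : Set (E2 q)) (σ : Measure (Zsp p q))
    (w : Zsp p q → Vsp p q) : Prop :=
  IsFiniteMeasure σ ∧ σ {z : Zsp p q | z.1 ∉ Ωs ∨ z.2 ∉ Ds} = 0 ∧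
    Integrable (fun z => Real.sqrt (normSqV (w z))) σ

/-- `C¹` test functions, compactly supported in the interior of `Ω` (in the `Ω` variable). -/
def TestFun {p q : ℕ} (Ωs : Set (E1 p)) (φ : Zsp p q → E1 p) : Prop :=
  ContDiff ℝ 1 φ ∧ ∃ K : Set (E1 p), IsCompact K ∧ K ⊆ interior Ωs ∧
    ∀ z : Zsp p q, z.1 ∉ K → φ z = 0

/-- The generalized continuity equation `∇_Ω μ + ∇_D · (w σ) = 0`, in weak form with
no-flux boundary conditions on `D`. -/
def ContEq {p q : ℕ} (Ωs : Set (E1 p)) (μ σ : Measure (Zsp p q))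
    (w : Zsp p q → Vsp p q) : Prop :=
  ∀ φ : Zsp p q → E1 p, TestFun Ωs φ →
    ∫ z, divOmega φ z ∂μ + ∫ z, pairV (gradD φ z) (w z) ∂σ = 0

/-- Dual values whose supremum is the Benamou–Brenier energy `Dir(μ, E)` of `E = w·σ`. -/
def dualSet {p q : ℕ} (μ σ : Measure (Zsp p q)) (w : Zsp p q → Vsp p q) : Set ℝ :=
  { r : ℝ | ∃ a : Zsp p q → ℝ, ∃ b : Zsp p q → Vsp p q, Continuous a ∧
      (∀ α, Continuous fun z => b z α) ∧ (∀ z, a z + normSqV (b z) / 2 ≤ 0) ∧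
      r = ∫ z, a z ∂μ + ∫ z, pairV (b z) (w z) ∂σ }

/-- The Benamou–Brenier Dirichlet energy `Dir(μ, E)` of the pair `(μ, E)`, `E = w·σ`. -/
def DirME {p q : ℕ} (μ σ : Measure (Zsp p q)) (w : Zsp p q → Vsp p q) : ℝ :=
  sSup (dualSet μ σ w)


/-- Two pairs (measure, momentum) have the same boundary term `BT`: the boundary terms
of the continuity equation, tested against all `ℝ^p`-valued `C¹` functions on `Ω × D`
(not necessarily vanishing near `∂Ω`), coincide. -/
def SameBT {p q : ℕ} (μ σ : Measure (Zsp p q)) (w : Zsp p q → Vsp p q)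
    (μ' σ' : Measure (Zsp p q)) (w' : Zsp p q → Vsp p q) : Prop :=
  ∀ φ : Zsp p q → E1 p, ContDiff ℝ 1 φ →
    ∫ z, divOmega φ z ∂μ + ∫ z, pairV (gradD φ z) (w z) ∂σ
      = ∫ z, divOmega φ z ∂μ' + ∫ z, pairV (gradD φ z) (w' z) ∂σ'

section BasicAlgebra

variable {p q : ℕ}

/-- Flatten a `Vsp` element into a Euclidean space. -/
def flatV (v : Vsp p q) : EuclideanSpace ℝ (Fin p × Fin q) :=
  (WithLp.equiv 2 _).symm (fun x => v x.1 x.2)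

@[simp] lemma flatV_apply (v : Vsp p q) (x : Fin p × Fin q) : flatV v x = v x.1 x.2 := rfl

lemma pairV_eq_inner (b w : Vsp p q) : pairV b w = ⟪flatV b, flatV w⟫ := by
  rw [pairV, PiLp.inner_apply, Fintype.sum_prod_type]
  refine Finset.sum_congr rfl fun α _ => ?_
  rw [PiLp.inner_apply]
  refine Finset.sum_congr rfl fun i _ => ?_
  simp [RCLike.inner_apply]

lemma normSqV_eq_norm_sq (v : Vsp p q) : normSqV v = ‖flatV v‖ ^ 2 := by
  rw [normSqV, EuclideanSpace.norm_eq, Real.sq_sqrt (by positivity), Fintype.sum_prod_type]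
  refine Finset.sum_congr rfl fun α _ => ?_
  rw [EuclideanSpace.norm_eq, Real.sq_sqrt (by positivity)]
  exact Finset.sum_congr rfl fun i _ => by simp

lemma normSqV_nonneg (v : Vsp p q) : 0 ≤ normSqV v :=
  Finset.sum_nonneg fun α _ => by positivity

lemma sqrt_normSqV (v : Vsp p q) : Real.sqrt (normSqV v) = ‖flatV v‖ := by
  rw [normSqV_eq_norm_sq, Real.sqrt_sq (norm_nonneg _)]

lemma abs_pairV_le (b w : Vsp p q) :
    |pairV b w| ≤ Real.sqrt (normSqV b) * Real.sqrt (normSqV w) := by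
  rw [pairV_eq_inner, sqrt_normSqV, sqrt_normSqV]
  exact abs_real_inner_le_norm _ _

lemma pairV_add_left (b b' w : Vsp p q) : pairV (b + b') w = pairV b w + pairV b' w := by
  rw [pairV, pairV, pairV, ← Finset.sum_add_distrib]
  exact Finset.sum_congr rfl fun α _ => by
    simp [inner_add_left]

lemma pairV_smul_left (t : ℝ) (b w : Vsp p q) : pairV (t • b) w = t * pairV b w := by
  rw [pairV, pairV, Finset.mul_sum]
  exact Finset.sum_congr rfl fun α _ => by
    simp [real_inner_smul_left, Finset.mul_sum, mul_assoc]

@[simp] lemma pairV_zero_left (w : Vsp p q) : pairV (0 : Vsp p q) w = 0 := by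
  simp [pairV]

@[simp] lemma pairV_zero_right (b : Vsp p q) : pairV b (0 : Vsp p q) = 0 := by
  simp [pairV]

lemma normSqV_smul (t : ℝ) (v : Vsp p q) : normSqV (t • v) = t ^ 2 * normSqV v := by
  rw [normSqV, normSqV, Finset.mul_sum]
  exact Finset.sum_congr rfl fun α _ => by
    rw [Pi.smul_apply, norm_smul, mul_pow]
    simp [Real.norm_eq_abs, sq_abs]

end BasicAlgebra

section Calculus

variable {p q : ℕ}

lemma continuous_euclidean_single {n : ℕ} (i : Fin n) :
    Continuous fun a : ℝ => (EuclideanSpace.single i a : EuclideanSpace ℝ (Fin n)) := by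
  have h : Isometry (fun a : ℝ => (EuclideanSpace.single i a : EuclideanSpace ℝ (Fin n))) := by
    intro a b
    simp only [edist_dist, EuclideanSpace.dist_single_same]
  exact h.continuous

lemma gradD_continuous {φ : Zsp p q → E1 p} (hφ : ContDiff ℝ 1 φ) (α : Fin p) :
    Continuous fun z => gradD φ z α := by
  have h1 : Continuous fun z => fderiv ℝ φ z := hφ.continuous_fderiv one_ne_zero
  refine continuous_finset_sum _ fun i _ => ?_
  have h2 : Continuous fun z => fderiv ℝ φ z ((0 : E1 p), EuclideanSpace.single i (1:ℝ)) :=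
    h1.clm_apply continuous_const
  exact (continuous_euclidean_single i).comp ((EuclideanSpace.proj α).continuous.comp h2)

lemma divOmega_continuous {φ : Zsp p q → E1 p} (hφ : ContDiff ℝ 1 φ) :
    Continuous (divOmega φ) := by
  have h1 : Continuous fun z => fderiv ℝ φ z := hφ.continuous_fderiv one_ne_zero
  refine continuous_finset_sum _ fun α _ => ?_
  exact (EuclideanSpace.proj α).continuous.comp (h1.clm_apply continuous_const)

lemma normSqV_continuous {F : Zsp p q → Vsp p q} (hF : ∀ α, Continuous fun z => F z α) :
    Continuous fun z => normSqV (F z) := by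
  refine continuous_finset_sum _ fun α _ => ?_
  exact ((hF α).norm).pow 2

lemma pairV_continuous_left {F G : Zsp p q → Vsp p q} (hF : ∀ α, Continuous fun z => F z α)
    (hG : ∀ α, Continuous fun z => G z α) :
    Continuous fun z => pairV (F z) (G z) := by
  refine continuous_finset_sum _ fun α _ => ?_
  exact Continuous.inner (hF α) (hG α)

lemma fderiv_add_apply {φ ψ : Zsp p q → E1 p} (hφ : ContDiff ℝ 1 φ) (hψ : ContDiff ℝ 1 ψ)
    (z : Zsp p q) (v : Zsp p q) :
    fderiv ℝ (φ + ψ) z v = fderiv ℝ φ z v + fderiv ℝ ψ z v := by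
  have h := fderiv_fun_add ((hφ.differentiable one_ne_zero).differentiableAt (x := z))
    ((hψ.differentiable one_ne_zero).differentiableAt (x := z))
  have : fderiv ℝ (φ + ψ) z = fderiv ℝ φ z + fderiv ℝ ψ z := by
    rw [← h]; rfl
  rw [this]; rfl

lemma fderiv_smul_apply {φ : Zsp p q → E1 p} (hφ : ContDiff ℝ 1 φ) (c : ℝ)
    (z : Zsp p q) (v : Zsp p q) :
    fderiv ℝ (c • φ) z v = c • fderiv ℝ φ z v := by
  have h := fderiv_fun_const_smul (𝕜 := ℝ) ((hφ.differentiable one_ne_zero).differentiableAt (x := z)) c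
  have : fderiv ℝ (c • φ) z = c • fderiv ℝ φ z := by
    rw [← h]; rfl
  rw [this]; rfl

lemma gradD_add {φ ψ : Zsp p q → E1 p} (hφ : ContDiff ℝ 1 φ) (hψ : ContDiff ℝ 1 ψ)
    (z : Zsp p q) : gradD (φ + ψ) z = gradD φ z + gradD ψ z := by
  funext α
  rw [Pi.add_apply, gradD, gradD, gradD, ← Finset.sum_add_distrib]
  refine Finset.sum_congr rfl fun i _ => ?_
  rw [fderiv_add_apply hφ hψ]
  ext j
  rcases eq_or_ne j i with h | h <;>
    simp [EuclideanSpace.single_apply, h]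

lemma gradD_smul {φ : Zsp p q → E1 p} (hφ : ContDiff ℝ 1 φ) (c : ℝ)
    (z : Zsp p q) : gradD (c • φ) z = c • gradD φ z := by
  funext α
  rw [Pi.smul_apply, gradD, gradD, Finset.smul_sum]
  refine Finset.sum_congr rfl fun i _ => ?_
  rw [fderiv_smul_apply hφ]
  ext j
  rcases eq_or_ne j i with h | h <;>
    simp [EuclideanSpace.single_apply, h]

lemma divOmega_add {φ ψ : Zsp p q → E1 p} (hφ : ContDiff ℝ 1 φ) (hψ : ContDiff ℝ 1 ψ)
    (z : Zsp p q) : divOmega (φ + ψ) z = divOmega φ z + divOmega ψ z := by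
  rw [divOmega, divOmega, divOmega, ← Finset.sum_add_distrib]
  refine Finset.sum_congr rfl fun α _ => ?_
  rw [fderiv_add_apply hφ hψ]
  rfl

lemma divOmega_smul {φ : Zsp p q → E1 p} (hφ : ContDiff ℝ 1 φ) (c : ℝ)
    (z : Zsp p q) : divOmega (c • φ) z = c * divOmega φ z := by
  rw [divOmega, divOmega, Finset.mul_sum]
  refine Finset.sum_congr rfl fun α _ => ?_
  rw [fderiv_smul_apply hφ]
  rfl

end Calculus

section MeasInfra

variable {p q : ℕ} {Ωs : Set (E1 p)} {Ds : Set (E2 q)}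

lemma compl_prod_eq (Ωs : Set (E1 p)) (Ds : Set (E2 q)) :
    (Ωs ×ˢ Ds)ᶜ = {z : Zsp p q | z.1 ∉ Ωs ∨ z.2 ∉ Ds} := by
  ext z
  simp only [Set.mem_compl_iff, Set.mem_prod, not_and_or, Set.mem_setOf_eq]

lemma RepMap.conc (hΩ : IsCompact Ωs) {μ : Measure (Zsp p q)}
    (h : RepMap Ωs Ds μ) : μ ((Ωs ×ˢ Ds)ᶜ) = 0 := by
  have hmeas : MeasurableSet Ωs := hΩ.isClosed.measurableSet
  have h1 : μ {z : Zsp p q | z.1 ∉ Ωs} = 0 := by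
    have h2 : μ.map Prod.fst Ωsᶜ = 0 := by
      rw [h.2.1, Measure.restrict_apply hmeas.compl]
      simp
    rwa [Measure.map_apply measurable_fst hmeas.compl] at h2
  rw [compl_prod_eq]
  have hsub : {z : Zsp p q | z.1 ∉ Ωs ∨ z.2 ∉ Ds} ⊆
      {z : Zsp p q | z.1 ∉ Ωs} ∪ {z : Zsp p q | z.2 ∉ Ds} := by
    intro z hz; exact hz
  exact measure_mono_null hsub (measure_union_null h1 h.2.2)

lemma Momentum.conc {σ : Measure (Zsp p q)} {w : Zsp p q → Vsp p q}
    (h : Momentum Ωs Ds σ w) : σ ((Ωs ×ˢ Ds)ᶜ) = 0 := by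
  rw [compl_prod_eq]; exact h.2.1

lemma ae_mem_of_conc {ν : Measure (Zsp p q)} {S : Set (Zsp p q)} (h : ν Sᶜ = 0) :
    ∀ᵐ z ∂ν, z ∈ S := by
  rw [ae_iff]
  exact h

lemma integrable_of_cont_conc {ν : Measure (Zsp p q)} [IsFiniteMeasure ν]
    {S : Set (Zsp p q)} (hS : IsCompact S) (hconc : ν Sᶜ = 0)
    {f : Zsp p q → ℝ} (hf : Continuous f) : Integrable f ν := by
  obtain ⟨M, hM⟩ : ∃ M, ∀ z ∈ S, ‖f z‖ ≤ M := hS.exists_bound_of_continuousOn hf.continuousOn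
  refine (integrable_const M).mono' hf.aestronglyMeasurable ?_
  filter_upwards [ae_mem_of_conc hconc] with z hz
  exact hM z hz

lemma cont_bound_on_compact {S : Set (Zsp p q)} (hS : IsCompact S)
    {f : Zsp p q → ℝ} (hf : Continuous f) : ∃ M, 0 ≤ M ∧ ∀ z ∈ S, |f z| ≤ M := by
  obtain ⟨M, hM⟩ : ∃ M, ∀ z ∈ S, ‖f z‖ ≤ M := hS.exists_bound_of_continuousOn hf.continuousOn
  exact ⟨max M 0, le_max_right _ _, fun z hz => le_trans (hM z hz) (le_max_left _ _)⟩

/-- domination for pairings against a momentum field -/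
lemma integrable_pair_dom {σ : Measure (Zsp p q)} [IsFiniteMeasure σ]
    {S : Set (Zsp p q)} (hS : IsCompact S) (hconc : σ Sᶜ = 0)
    {w : Zsp p q → Vsp p q} (hw : Integrable (fun z => Real.sqrt (normSqV (w z))) σ)
    {F : Zsp p q → Vsp p q} (hF : ∀ α, Continuous fun z => F z α)
    (hmeas : AEStronglyMeasurable (fun z => pairV (F z) (w z)) σ) :
    Integrable (fun z => pairV (F z) (w z)) σ := by
  obtain ⟨M, hM0, hM⟩ := cont_bound_on_compact hS
    ((Real.continuous_sqrt).comp (normSqV_continuous hF))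
  refine (hw.const_mul M).mono' hmeas ?_
  filter_upwards [ae_mem_of_conc hconc] with z hz
  rw [Real.norm_eq_abs]
  calc |pairV (F z) (w z)| ≤ Real.sqrt (normSqV (F z)) * Real.sqrt (normSqV (w z)) :=
        abs_pairV_le _ _
    _ ≤ M * Real.sqrt (normSqV (w z)) := by
        apply mul_le_mul_of_nonneg_right _ (Real.sqrt_nonneg _)
        have h2 : |Real.sqrt (normSqV (F z))| ≤ M := hM z hz
        rwa [abs_of_nonneg (Real.sqrt_nonneg _)] at h2

lemma eq_of_tendsto_of_frequently {f : ℕ → ℝ} {L c : ℝ}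
    (hf : Filter.Tendsto f Filter.atTop (nhds L)) (h : ∃ᶠ n in Filter.atTop, f n = c) :
    c = L := by
  by_contra hne
  have hd : 0 < |c - L| := by
    rw [abs_pos, sub_ne_zero]; exact hne
  have hev : ∀ᶠ n in Filter.atTop, |f n - L| < |c - L| := by
    have := Metric.tendsto_nhds.mp hf |c - L| hd
    simpa [Real.dist_eq] using this
  obtain ⟨n, hn1, hn2⟩ := (h.and_eventually hev).exists
  rw [hn1] at hn2
  exact lt_irrefl _ hn2

/-- weak convergence upgraded to (possibly unbounded) continuous integrands,
using concentration on a compact set. -/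
lemma tendsto_integral_of_weak {K : Set (Zsp p q)} (hK : IsCompact K)
    (μseq : ℕ → Measure (Zsp p q)) (μ : Measure (Zsp p q))
    (hconcn : ∀ n, μseq n Kᶜ = 0) (hconc : μ Kᶜ = 0)
    (hweak : ∀ g : BoundedContinuousFunction (Zsp p q) ℝ,
      Filter.Tendsto (fun n => ∫ z, g z ∂(μseq n)) Filter.atTop (nhds (∫ z, g z ∂μ)))
    {f : Zsp p q → ℝ} (hf : Continuous f) :
    Filter.Tendsto (fun n => ∫ z, f z ∂(μseq n)) Filter.atTop (nhds (∫ z, f z ∂μ)) := by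
  rcases Set.eq_empty_or_nonempty K with hKe | hKne
  · -- all measures vanish
    have hμ0 : μ = 0 := by
      have : μ Set.univ = 0 := by
        have := hconc; rw [hKe] at this; simpa using this
      exact Measure.measure_univ_eq_zero.mp this
    have hn0 : ∀ n, μseq n = 0 := by
      intro n
      have := hconcn n; rw [hKe] at this
      exact Measure.measure_univ_eq_zero.mp (by simpa using this)
    simp only [hμ0, hn0, integral_zero_measure]
    exact tendsto_const_nhds
  · set c : Zsp p q → ℝ := fun z => max 0 (1 - Metric.infDist z K) with hc
    have hc_cont : Continuous c :=
      continuous_const.max (continuous_const.sub (Metric.continuous_infDist_pt K))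
    have hc_one : ∀ z ∈ K, c z = 1 := by
      intro z hz
      simp [hc, Metric.infDist_zero_of_mem hz]
    set T : Set (Zsp p q) := Metric.cthickening 1 K with hT
    have hTcomp : IsCompact T := hK.cthickening
    obtain ⟨M, hM0, hM⟩ := cont_bound_on_compact hTcomp hf
    have hbound : ∀ z, ‖c z * f z‖ ≤ M := by
      intro z
      by_cases hzT : z ∈ T
      · rw [Real.norm_eq_abs, abs_mul]
        have h1 : |c z| ≤ 1 := by
          rw [abs_of_nonneg (le_max_left _ _)]
          simp only [hc, max_le_iff]
          constructor
          · linarith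
          · have := Metric.infDist_nonneg (x := z) (s := K); linarith
        calc |c z| * |f z| ≤ 1 * M :=
              mul_le_mul h1 (hM z hzT) (abs_nonneg _) zero_le_one
          _ = M := one_mul M
      · have hz0 : c z = 0 := by
          have hgt : ¬ Metric.infDist z K ≤ 1 := by
            intro hle
            apply hzT
            rw [hT, Metric.mem_cthickening_iff]
            have hne : EMetric.infEdist z K ≠ ⊤ := Metric.infEdist_ne_top hKne
            calc EMetric.infEdist z K = ENNReal.ofReal (Metric.infDist z K) := by
                  rw [Metric.infDist]; exact (ENNReal.ofReal_toReal hne).symm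
              _ ≤ ENNReal.ofReal 1 := ENNReal.ofReal_le_ofReal hle
          push_neg at hgt
          simp only [hc, max_eq_left_iff]
          linarith
        rw [hz0]; simpa using hM0
    set G : BoundedContinuousFunction (Zsp p q) ℝ :=
      BoundedContinuousFunction.ofNormedAddCommGroup (fun z => c z * f z)
        (hc_cont.mul hf) M hbound with hG
    have hGf : ∀ (ν : Measure (Zsp p q)), ν Kᶜ = 0 → ∫ z, G z ∂ν = ∫ z, f z ∂ν := by
      intro ν hν
      refine integral_congr_ae ?_
      filter_upwards [ae_mem_of_conc hν] with z hz
      simp [hG, BoundedContinuousFunction.coe_ofNormedAddCommGroup, hc_one z hz]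
    have := hweak G
    rw [hGf μ hconc] at this
    refine this.congr fun n => ?_
    exact hGf (μseq n) (hconcn n)

end MeasInfra

section Estimates

variable {p q : ℕ}

lemma quad_bound {X Y C : ℝ} (hY : 0 ≤ Y) (hC : 0 ≤ C)
    (h : ∀ t : ℝ, t * X - t ^ 2 * Y / 2 ≤ C) : |X| ≤ Real.sqrt (2 * C * Y) := by
  rcases eq_or_lt_of_le hY with hY0 | hYpos
  · have hX : X = 0 := by
      by_contra hX
      have ht := h ((C + 1) / X)
      rw [div_mul_cancel₀ _ hX, ← hY0] at ht
      simp at ht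
      linarith
    rw [hX]
    simpa using Real.sqrt_nonneg _
  · have ht := h (X / Y)
    have hXY : X ^ 2 / (2 * Y) ≤ C := by
      have : X / Y * X - (X / Y) ^ 2 * Y / 2 = X ^ 2 / (2 * Y) := by
        field_simp
        ring
      linarith [this ▸ ht]
    have hsq : X ^ 2 ≤ 2 * C * Y := by
      rw [div_le_iff₀ (by positivity)] at hXY
      linarith [hXY]
    exact Real.abs_le_sqrt hsq

lemma zero_mem_dualSet (μ σ : Measure (Zsp p q)) (w : Zsp p q → Vsp p q) :
    (0 : ℝ) ∈ dualSet μ σ w := by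
  refine ⟨fun _ => 0, fun _ => 0, continuous_const, fun α => continuous_const, ?_, ?_⟩
  · intro z
    simp [normSqV]
  · simp

lemma DirME_nonneg {μ σ : Measure (Zsp p q)} {w : Zsp p q → Vsp p q}
    (hBdd : BddAbove (dualSet μ σ w)) : 0 ≤ DirME μ σ w :=
  le_csSup hBdd (zero_mem_dualSet μ σ w)

/-- The fundamental junk-robust energy estimate for pairings against a momentum. -/
lemma pairing_estimate {μ σ : Measure (Zsp p q)} {w : Zsp p q → Vsp p q} {C : ℝ} (hC : 0 ≤ C)
    (hBdd : BddAbove (dualSet μ σ w)) (hDir : DirME μ σ w ≤ C)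
    {F : Zsp p q → Vsp p q} (hF : ∀ α, Continuous fun z => F z α) :
    |∫ z, pairV (F z) (w z) ∂σ| ≤ Real.sqrt (2 * C * ∫ z, normSqV (F z) ∂μ) := by
  set X := ∫ z, pairV (F z) (w z) ∂σ with hX
  set Y := ∫ z, normSqV (F z) ∂μ with hY
  have hY0 : 0 ≤ Y := integral_nonneg fun z => normSqV_nonneg _
  refine quad_bound hY0 hC ?_
  intro t
  set a : Zsp p q → ℝ := fun z => -(t ^ 2) / 2 * normSqV (F z) with ha
  set b : Zsp p q → Vsp p q := fun z => t • F z with hb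
  have hmem : (∫ z, a z ∂μ + ∫ z, pairV (b z) (w z) ∂σ) ∈ dualSet μ σ w := by
    refine ⟨a, b, ?_, ?_, ?_, rfl⟩
    · exact (continuous_const.mul (normSqV_continuous hF))
    · intro α
      exact ((hF α).const_smul t)
    · intro z
      have : normSqV (b z) = t ^ 2 * normSqV (F z) := normSqV_smul t (F z)
      rw [ha, this]
      ring_nf
      simp
  have hle : ∫ z, a z ∂μ + ∫ z, pairV (b z) (w z) ∂σ ≤ C :=
    le_trans (le_csSup hBdd hmem) hDir
  have e1 : ∫ z, a z ∂μ = -(t ^ 2) / 2 * Y := by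
    rw [ha, hY]
    exact MeasureTheory.integral_const_mul _ _
  have e2 : ∫ z, pairV (b z) (w z) ∂σ = t * X := by
    rw [hX, ← MeasureTheory.integral_const_mul]
    refine integral_congr_ae (Filter.Eventually.of_forall fun z => ?_)
    exact pairV_smul_left t (F z) (w z)
  rw [e1, e2] at hle
  linarith

end Estimates

section ConstField

variable {p q : ℕ}

/-- The `C¹` function on `Ω × D` whose `gradD` is the constant field `E`. -/
def chiE (E : Vsp p q) : Zsp p q → E1 p :=
  fun z => ∑ α, ⟪E α, z.2⟫ • EuclideanSpace.single α (1:ℝ)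

/-- The derivative of `chiE E` as a continuous linear map. -/
def chiE_deriv (E : Vsp p q) : Zsp p q →L[ℝ] E1 p :=
  (∑ α, (innerSL ℝ (E α)).smulRight (EuclideanSpace.single α (1:ℝ))).comp
    (ContinuousLinearMap.snd ℝ (E1 p) (E2 q))

lemma chiE_eq_clm (E : Vsp p q) : chiE E = fun z => chiE_deriv E z := by
  funext z
  rw [chiE, chiE_deriv]
  simp [ContinuousLinearMap.sum_apply]

lemma chiE_contDiff (E : Vsp p q) : ContDiff ℝ 1 (chiE E) := by
  rw [chiE_eq_clm]
  exact (chiE_deriv E).contDiff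

lemma chiE_fderiv (E : Vsp p q) (z : Zsp p q) :
    fderiv ℝ (chiE E) z = chiE_deriv E := by
  rw [chiE_eq_clm]
  exact (chiE_deriv E).fderiv

lemma divOmega_chiE (E : Vsp p q) (z : Zsp p q) : divOmega (chiE E) z = 0 := by
  rw [divOmega]
  refine Finset.sum_eq_zero fun α _ => ?_
  rw [chiE_fderiv, chiE_deriv]
  simp

lemma gradD_chiE (E : Vsp p q) (z : Zsp p q) : gradD (chiE E) z = E := by
  funext α
  rw [gradD]
  have key : ∀ i : Fin q,
      fderiv ℝ (chiE E) z ((0 : E1 p), EuclideanSpace.single i (1:ℝ)) α = E α i := by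
    intro i
    rw [chiE_fderiv, chiE_deriv]
    simp only [ContinuousLinearMap.comp_apply, ContinuousLinearMap.coe_snd',
      ContinuousLinearMap.coe_sum', Finset.sum_apply, ContinuousLinearMap.smulRight_apply,
      innerSL_apply_apply]
    have hsnd : (Prod.snd ((0 : E1 p), EuclideanSpace.single i (1:ℝ)))
        = EuclideanSpace.single i (1:ℝ) := rfl
    rw [show ((∑ x : Fin p, (inner ℝ (E x) (((0 : E1 p), EuclideanSpace.single i (1:ℝ)).2) : ℝ)
        • EuclideanSpace.single x (1:ℝ)) α)
      = ∑ x : Fin p, ((inner ℝ (E x) (EuclideanSpace.single i (1:ℝ)) : ℝ)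
        • EuclideanSpace.single x (1:ℝ)) α from by simp only [WithLp.ofLp_sum, Finset.sum_apply]]
    rw [Finset.sum_eq_single α]
    · rw [PiLp.smul_apply, EuclideanSpace.single_apply, if_pos rfl, smul_eq_mul, mul_one]
      have h := EuclideanSpace.inner_single_right (𝕜 := ℝ) i (1:ℝ) (E α)
      simpa using h
    · intro β _ hβ
      rw [PiLp.smul_apply, EuclideanSpace.single_apply, if_neg (Ne.symm hβ)]
      simp
    · intro h; exact absurd (Finset.mem_univ α) h
  calc (∑ i, EuclideanSpace.single i
        (fderiv ℝ (chiE E) z ((0 : E1 p), EuclideanSpace.single i (1:ℝ)) α)) =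
      ∑ i, EuclideanSpace.single i (E α i) := by
        refine Finset.sum_congr rfl fun i _ => ?_
        rw [key i]
    _ = E α := by
        ext j
        rw [show (∑ i, (EuclideanSpace.single i (E α i) : E2 q)) j
            = ∑ i, (EuclideanSpace.single i (E α i) : E2 q) j from
          by simp only [WithLp.ofLp_sum, Finset.sum_apply]]
        simp only [EuclideanSpace.single_apply]
        rw [Finset.sum_ite_eq Finset.univ j (fun i => E α i)]
        simp

/-- basis constant fields -/
def Eb (α : Fin p) (i : Fin q) : Vsp p q :=
  fun β => if β = α then EuclideanSpace.single i (1:ℝ) else 0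

lemma pairV_Eb (α : Fin p) (i : Fin q) (v : Vsp p q) : pairV (Eb α i) v = v α i := by
  rw [pairV, Finset.sum_eq_single α]
  · rw [Eb]; simp only [if_pos rfl]
    have h := EuclideanSpace.inner_single_left (𝕜 := ℝ) i (1:ℝ) (v α)
    simpa using h
  · intro β _ hβ
    rw [Eb]; simp [if_neg hβ]
  · intro h; exact absurd (Finset.mem_univ α) h

end ConstField

section LineLemmas

variable {p q : ℕ}

lemma line_junk {σ : Measure (Zsp p q)} {f g : Zsp p q → ℝ} (hg : ¬ Integrable g σ)
    {s₁ s₂ : ℝ} (h1 : Integrable (fun z => f z + s₁ * g z) σ)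
    (h2 : Integrable (fun z => f z + s₂ * g z) σ) (hne : s₁ ≠ s₂) : False := by
  have hsub : Integrable (fun z => (s₁ - s₂) * g z) σ := by
    have hsub0 := h1.sub h2
    refine hsub0.congr (Filter.Eventually.of_forall fun z => ?_)
    simp only [Pi.sub_apply]
    ring
  have : Integrable g σ := by
    have h3 := hsub.const_mul (s₁ - s₂)⁻¹
    refine h3.congr (Filter.Eventually.of_forall fun z => ?_)
    show (s₁ - s₂)⁻¹ * ((s₁ - s₂) * g z) = g z
    rw [← mul_assoc, inv_mul_cancel₀ (sub_ne_zero.mpr hne), one_mul]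
  exact hg this

/-- If both perturbation directions are non-integrable, there is a common junk shift
`s ∈ {0,1,2}`. -/
lemma common_junk {σn σb : Measure (Zsp p q)} {fn gn fb gb : Zsp p q → ℝ}
    (hgn : ¬ Integrable gn σn) (hgb : ¬ Integrable gb σb) :
    ∃ s : ℝ, ¬ Integrable (fun z => fn z + s * gn z) σn ∧
      ¬ Integrable (fun z => fb z + s * gb z) σb := by
  by_contra hcon
  push_neg at hcon
  have h0 := hcon 0
  have h1 := hcon 1
  have h2 := hcon 2
  by_cases i0 : Integrable (fun z => fn z + (0:ℝ) * gn z) σn <;>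
  by_cases i1 : Integrable (fun z => fn z + (1:ℝ) * gn z) σn <;>
  by_cases i2 : Integrable (fun z => fn z + (2:ℝ) * gn z) σn
  · exact line_junk hgn i0 i1 (by norm_num)
  · exact line_junk hgn i0 i1 (by norm_num)
  · exact line_junk hgn i0 i2 (by norm_num)
  · exact line_junk hgb (h1 i1) (h2 i2) (by norm_num)
  · exact line_junk hgn i1 i2 (by norm_num)
  · exact line_junk hgb (h0 i0) (h2 i2) (by norm_num)
  · exact line_junk hgb (h0 i0) (h1 i1) (by norm_num)
  · exact line_junk hgb (h0 i0) (h1 i1) (by norm_num)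

/-- If one direction is non-integrable, there are two distinct junk shifts. -/
lemma two_junk {σ : Measure (Zsp p q)} {f g : Zsp p q → ℝ} (hg : ¬ Integrable g σ) :
    ∃ s₁ s₂ : ℝ, s₁ ≠ s₂ ∧ ¬ Integrable (fun z => f z + s₁ * g z) σ ∧
      ¬ Integrable (fun z => f z + s₂ * g z) σ := by
  by_cases i0 : Integrable (fun z => f z + (0:ℝ) * g z) σ
  · refine ⟨1, 2, by norm_num, ?_, ?_⟩
    · intro i1; exact line_junk hg i0 i1 (by norm_num)
    · intro i2; exact line_junk hg i0 i2 (by norm_num)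
  · by_cases i1 : Integrable (fun z => f z + (1:ℝ) * g z) σ
    · refine ⟨0, 2, by norm_num, i0, ?_⟩
      intro i2; exact line_junk hg i1 i2 (by norm_num)
    · exact ⟨0, 1, by norm_num, i0, i1⟩

end LineLemmas

section Trichotomy

variable {p q : ℕ}

lemma divOmega_smul' {φ : Zsp p q → E1 p} (hφ : ContDiff ℝ 1 φ) (c : ℝ) (z : Zsp p q) :
    divOmega (fun y => c • φ y) z = c * divOmega φ z := divOmega_smul hφ c z

lemma gradD_smul' {φ : Zsp p q → E1 p} (hφ : ContDiff ℝ 1 φ) (c : ℝ) (z : Zsp p q) :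
    gradD (fun y => c • φ y) z = c • gradD φ z := gradD_smul hφ c z

lemma divOmega_shift {χ : Zsp p q → E1 p} (hχ : ContDiff ℝ 1 χ) (E : Vsp p q) (s : ℝ)
    (z : Zsp p q) : divOmega (χ + s • chiE E) z = divOmega χ z := by
  show divOmega (χ + fun y => s • chiE E y) z = divOmega χ z
  rw [divOmega_add hχ ((chiE_contDiff E).const_smul s),
    divOmega_smul' (chiE_contDiff E), divOmega_chiE]
  ring

lemma pair_gradD_shift {χ : Zsp p q → E1 p} (hχ : ContDiff ℝ 1 χ) (E : Vsp p q) (s : ℝ)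
    (w : Zsp p q → Vsp p q) (z : Zsp p q) :
    pairV (gradD (χ + s • chiE E) z) (w z)
      = pairV (gradD χ z) (w z) + s * pairV E (w z) := by
  show pairV (gradD (χ + fun y => s • chiE E y) z) (w z) = _
  rw [gradD_add hχ ((chiE_contDiff E).const_smul s), pairV_add_left,
    gradD_smul' (chiE_contDiff E), gradD_chiE, pairV_smul_left]

lemma sameBT_shifted {μn σn μb σb : Measure (Zsp p q)} {wn wb : Zsp p q → Vsp p q}
    (hS : SameBT μn σn wn μb σb wb) {χ : Zsp p q → E1 p} (hχ : ContDiff ℝ 1 χ)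
    (E : Vsp p q) (s : ℝ) :
    ∫ z, divOmega χ z ∂μn
        + ∫ z, (pairV (gradD χ z) (wn z) + s * pairV E (wn z)) ∂σn
      = ∫ z, divOmega χ z ∂μb
        + ∫ z, (pairV (gradD χ z) (wb z) + s * pairV E (wb z)) ∂σb := by
  have hχ' : ContDiff ℝ 1 (χ + s • chiE E) := hχ.add ((chiE_contDiff E).const_smul s)
  have h := hS (χ + s • chiE E) hχ'
  have ediv : ∀ ν : Measure (Zsp p q),
      ∫ z, divOmega (χ + s • chiE E) z ∂ν = ∫ z, divOmega χ z ∂ν := by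
    intro ν
    exact integral_congr_ae (Filter.Eventually.of_forall fun z => divOmega_shift hχ E s z)
  have epair : ∀ (ν : Measure (Zsp p q)) (w : Zsp p q → Vsp p q),
      ∫ z, pairV (gradD (χ + s • chiE E) z) (w z) ∂ν
        = ∫ z, (pairV (gradD χ z) (w z) + s * pairV E (w z)) ∂ν := by
    intro ν w
    exact integral_congr_ae (Filter.Eventually.of_forall fun z => pair_gradD_shift hχ E s w z)
  rw [ediv μn, ediv μb, epair σn wn, epair σb wb] at h
  exact h

/-- The per-`n` trichotomy. -/
lemma trichotomy {μn σn μb σb : Measure (Zsp p q)} {wn wb : Zsp p q → Vsp p q}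
    (hS : SameBT μn σn wn μb σb wb) :
    (∀ (α : Fin p) (i : Fin q), Integrable (fun z => wn z α i) σn) ∨
    (∀ χ : Zsp p q → E1 p, ContDiff ℝ 1 χ →
      ∫ z, divOmega χ z ∂μn
        = ∫ z, divOmega χ z ∂μb + ∫ z, pairV (gradD χ z) (wb z) ∂σb) ∨
    (∀ χ : Zsp p q → E1 p, ContDiff ℝ 1 χ →
      ∫ z, divOmega χ z ∂μn = ∫ z, divOmega χ z ∂μb) := by
  by_cases hH : ∀ (α : Fin p) (i : Fin q), Integrable (fun z => wn z α i) σn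
  · exact Or.inl hH
  · push_neg at hH
    obtain ⟨α, i, hbad⟩ := hH
    have hgn : ¬ Integrable (fun z => pairV (Eb α i) (wn z)) σn := by
      intro h
      apply hbad
      refine h.congr (Filter.Eventually.of_forall fun z => ?_)
      exact pairV_Eb α i (wn z)
    by_cases hbE : Integrable (fun z => pairV (Eb α i) (wb z)) σb
    · -- case A
      refine Or.inr (Or.inl fun χ hχ => ?_)
      obtain ⟨s₁, s₂, hne, hj1, hj2⟩ :=
        two_junk (σ := σn) (f := fun z => pairV (gradD χ z) (wn z)) hgn
      -- the wb-side integral is affine in s with some slope κ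
      have haff : ∃ κ : ℝ, ∀ s : ℝ,
          ∫ z, (pairV (gradD χ z) (wb z) + s * pairV (Eb α i) (wb z)) ∂σb
            = (∫ z, pairV (gradD χ z) (wb z) ∂σb) + s * κ := by
        by_cases hfb : Integrable (fun z => pairV (gradD χ z) (wb z)) σb
        · refine ⟨∫ z, pairV (Eb α i) (wb z) ∂σb, fun s => ?_⟩
          rw [integral_add hfb (hbE.const_mul s), MeasureTheory.integral_const_mul]
        · refine ⟨0, fun s => ?_⟩
          rw [integral_undef hfb]
          rw [integral_undef ?_]
          · ring
          · intro hsum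
            apply hfb
            have := hsum.sub (hbE.const_mul s)
            refine this.congr (Filter.Eventually.of_forall fun z => ?_)
            simp only [Pi.sub_apply]
            ring
      obtain ⟨κ, hκ⟩ := haff
      have e1 := sameBT_shifted hS hχ (Eb α i) s₁
      have e2 := sameBT_shifted hS hχ (Eb α i) s₂
      rw [integral_undef hj1, hκ s₁] at e1
      rw [integral_undef hj2, hκ s₂] at e2
      have hκ0 : κ = 0 := by
        have : (s₁ - s₂) * κ = 0 := by linarith
        rcases mul_eq_zero.mp this with h | h
        · exact absurd (sub_eq_zero.mp h) hne
        · exact h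
      rw [hκ0] at e1
      linarith
    · -- case B
      refine Or.inr (Or.inr fun χ hχ => ?_)
      obtain ⟨s, hjn, hjb⟩ := common_junk (σn := σn) (σb := σb)
        (fn := fun z => pairV (gradD χ z) (wn z)) (fb := fun z => pairV (gradD χ z) (wb z))
        hgn hbE
      have e := sameBT_shifted hS hχ (Eb α i) s
      rw [integral_undef hjn, integral_undef hjb] at e
      linarith

end Trichotomy

section HCase

variable {p q : ℕ}

lemma pairV_eq_sum (b v : Vsp p q) : pairV b v = ∑ α, ∑ i, b α i * v α i := by
  rw [pairV]
  refine Finset.sum_congr rfl fun α _ => ?_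
  rw [PiLp.inner_apply]
  exact Finset.sum_congr rfl fun i _ => by simp [RCLike.inner_apply, mul_comm]

lemma coord_continuous {F : Zsp p q → Vsp p q} (hF : ∀ α, Continuous fun z => F z α)
    (α : Fin p) (i : Fin q) : Continuous fun z => F z α i :=
  (EuclideanSpace.proj i).continuous.comp (hF α)

lemma pair_aesm_of_H {σ : Measure (Zsp p q)} {w : Zsp p q → Vsp p q}
    (hH : ∀ (α : Fin p) (i : Fin q), Integrable (fun z => w z α i) σ)
    {F : Zsp p q → Vsp p q} (hF : ∀ α, Continuous fun z => F z α) :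
    AEStronglyMeasurable (fun z => pairV (F z) (w z)) σ := by
  have : ∀ z, pairV (F z) (w z) = ∑ α, ∑ i, F z α i * w z α i := fun z => pairV_eq_sum _ _
  simp only [this]
  refine Finset.aestronglyMeasurable_fun_sum _ fun α _ => ?_
  refine Finset.aestronglyMeasurable_fun_sum _ fun i _ => ?_
  exact ((coord_continuous hF α i).aestronglyMeasurable).mul (hH α i).aestronglyMeasurable

lemma pair_integrable_of_H {σ : Measure (Zsp p q)} [IsFiniteMeasure σ]
    {S : Set (Zsp p q)} (hS : IsCompact S) (hconc : σ Sᶜ = 0)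
    {w : Zsp p q → Vsp p q} (hw : Integrable (fun z => Real.sqrt (normSqV (w z))) σ)
    (hH : ∀ (α : Fin p) (i : Fin q), Integrable (fun z => w z α i) σ)
    {F : Zsp p q → Vsp p q} (hF : ∀ α, Continuous fun z => F z α) :
    Integrable (fun z => pairV (F z) (w z)) σ :=
  integrable_pair_dom hS hconc hw hF (pair_aesm_of_H hH hF)

lemma pair_integral_add_of_H {σ : Measure (Zsp p q)} [IsFiniteMeasure σ]
    {S : Set (Zsp p q)} (hS : IsCompact S) (hconc : σ Sᶜ = 0)
    {w : Zsp p q → Vsp p q} (hw : Integrable (fun z => Real.sqrt (normSqV (w z))) σ)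
    (hH : ∀ (α : Fin p) (i : Fin q), Integrable (fun z => w z α i) σ)
    {φ ψ : Zsp p q → E1 p} (hφ : ContDiff ℝ 1 φ) (hψ : ContDiff ℝ 1 ψ) :
    ∫ z, pairV (gradD (φ + ψ) z) (w z) ∂σ
      = ∫ z, pairV (gradD φ z) (w z) ∂σ + ∫ z, pairV (gradD ψ z) (w z) ∂σ := by
  have h1 : Integrable (fun z => pairV (gradD φ z) (w z)) σ :=
    pair_integrable_of_H hS hconc hw hH (gradD_continuous hφ)
  have h2 : Integrable (fun z => pairV (gradD ψ z) (w z)) σ :=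
    pair_integrable_of_H hS hconc hw hH (gradD_continuous hψ)
  rw [← integral_add h1 h2]
  refine integral_congr_ae (Filter.Eventually.of_forall fun z => ?_)
  show pairV (gradD (φ + ψ) z) (w z) = pairV (gradD φ z) (w z) + pairV (gradD ψ z) (w z)
  rw [gradD_add hφ hψ, pairV_add_left]

lemma pair_integral_smul {σ : Measure (Zsp p q)} {w : Zsp p q → Vsp p q}
    {φ : Zsp p q → E1 p} (hφ : ContDiff ℝ 1 φ) (c : ℝ) :
    ∫ z, pairV (gradD (c • φ) z) (w z) ∂σ = c * ∫ z, pairV (gradD φ z) (w z) ∂σ := by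
  rw [← MeasureTheory.integral_const_mul]
  refine integral_congr_ae (Filter.Eventually.of_forall fun z => ?_)
  show pairV (gradD (c • φ) z) (w z) = c * pairV (gradD φ z) (w z)
  rw [gradD_smul hφ, pairV_smul_left]

lemma div_integral_add {ν : Measure (Zsp p q)} [IsFiniteMeasure ν]
    {S : Set (Zsp p q)} (hS : IsCompact S) (hconc : ν Sᶜ = 0)
    {φ ψ : Zsp p q → E1 p} (hφ : ContDiff ℝ 1 φ) (hψ : ContDiff ℝ 1 ψ) :
    ∫ z, divOmega (φ + ψ) z ∂ν = ∫ z, divOmega φ z ∂ν + ∫ z, divOmega ψ z ∂ν := by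
  have h1 : Integrable (divOmega φ) ν := integrable_of_cont_conc hS hconc (divOmega_continuous hφ)
  have h2 : Integrable (divOmega ψ) ν := integrable_of_cont_conc hS hconc (divOmega_continuous hψ)
  rw [← integral_add h1 h2]
  refine integral_congr_ae (Filter.Eventually.of_forall fun z => ?_)
  show divOmega (φ + ψ) z = divOmega φ z + divOmega ψ z
  exact divOmega_add hφ hψ z

lemma div_integral_smul {ν : Measure (Zsp p q)} {φ : Zsp p q → E1 p}
    (hφ : ContDiff ℝ 1 φ) (c : ℝ) :
    ∫ z, divOmega (c • φ) z ∂ν = c * ∫ z, divOmega φ z ∂ν := by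
  rw [← MeasureTheory.integral_const_mul]
  refine integral_congr_ae (Filter.Eventually.of_forall fun z => ?_)
  show divOmega (c • φ) z = c * divOmega φ z
  exact divOmega_smul hφ c z

end HCase

section Hilbert

variable {p q : ℕ}

abbrev EV (p q : ℕ) : Type := EuclideanSpace ℝ (Fin p × Fin q)

def unflatV (e : EV p q) : Vsp p q := fun α => (WithLp.equiv 2 _).symm (fun i => e (α, i))

lemma flat_unflat (e : EV p q) : flatV (unflatV e) = e := rfl

lemma pair_unflat (b : Vsp p q) (e : EV p q) : pairV b (unflatV e) = ⟪flatV b, e⟫ := by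
  rw [show ⟪flatV b, e⟫ = ⟪flatV b, flatV (unflatV e)⟫ by rw [flat_unflat],
    ← pairV_eq_inner]

lemma sqrt_normSq_unflat (e : EV p q) : Real.sqrt (normSqV (unflatV e)) = ‖e‖ := by
  rw [sqrt_normSqV, flat_unflat]

lemma flat_continuous {F : Zsp p q → Vsp p q} (hF : ∀ α, Continuous fun z => F z α) :
    Continuous fun z => flatV (F z) := by
  have : Continuous fun z : Zsp p q => (fun x : Fin p × Fin q => F z x.1 x.2) :=
    continuous_pi fun x => coord_continuous hF x.1 x.2
  exact (PiLp.continuous_toLp 2 (fun _ : Fin p × Fin q => ℝ)).comp this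

lemma memℒp_flat {μ : Measure (Zsp p q)} [IsFiniteMeasure μ]
    {S : Set (Zsp p q)} (hS : IsCompact S) (hconc : μ Sᶜ = 0)
    {F : Zsp p q → Vsp p q} (hF : ∀ α, Continuous fun z => F z α) :
    MemLp (fun z => flatV (F z)) 2 μ := by
  obtain ⟨M, hM0, hM⟩ := cont_bound_on_compact hS
    ((Real.continuous_sqrt).comp (normSqV_continuous hF))
  refine MemLp.of_bound (flat_continuous hF).aestronglyMeasurable M ?_
  filter_upwards [ae_mem_of_conc hconc] with z hz
  have h2 : |Real.sqrt (normSqV (F z))| ≤ M := hM z hz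
  rw [abs_of_nonneg (Real.sqrt_nonneg _), sqrt_normSqV] at h2
  exact h2

lemma norm_toLp_flat_sq {μ : Measure (Zsp p q)} {F : Zsp p q → Vsp p q}
    (hmem : MemLp (fun z => flatV (F z)) 2 μ) :
    ‖hmem.toLp _‖ ^ 2 = ∫ z, normSqV (F z) ∂μ := by
  have h1 : ⟪hmem.toLp _, hmem.toLp _⟫ = ∫ z, ⟪(↑↑(hmem.toLp _) : Zsp p q → EV p q) z,
      (↑↑(hmem.toLp _) : Zsp p q → EV p q) z⟫ ∂μ := L2.inner_def _ _
  have h2 : ∫ z, ⟪(↑↑(hmem.toLp _) : Zsp p q → EV p q) z,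
      (↑↑(hmem.toLp _) : Zsp p q → EV p q) z⟫ ∂μ = ∫ z, normSqV (F z) ∂μ := by
    refine integral_congr_ae ?_
    filter_upwards [hmem.coeFn_toLp] with z hz
    rw [hz, real_inner_self_eq_norm_sq, ← normSqV_eq_norm_sq]
  rw [← real_inner_self_eq_norm_sq, h1, h2]

/-- The Hilbert-space (Hahn-Banach / Riesz) construction of the witness momentum field. -/
lemma hilbert_witness {Ωs : Set (E1 p)} {Ds : Set (E2 q)}
    (hΩ : IsCompact Ωs) (hD : IsCompact Ds)
    (μ : Measure (Zsp p q)) [IsProbabilityMeasure μ] (hconc : μ ((Ωs ×ˢ Ds)ᶜ) = 0)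
    (C : ℝ) (hC : 0 ≤ C)
    (Λ : (Zsp p q → E1 p) → ℝ)
    (hadd : ∀ φ ψ : Zsp p q → E1 p, ContDiff ℝ 1 φ → ContDiff ℝ 1 ψ →
      Λ (φ + ψ) = Λ φ + Λ ψ)
    (hsmul : ∀ (c : ℝ) (φ : Zsp p q → E1 p), ContDiff ℝ 1 φ → Λ (c • φ) = c * Λ φ)
    (hbound : ∀ φ : Zsp p q → E1 p, ContDiff ℝ 1 φ →
      |Λ φ| ≤ Real.sqrt (2 * C * ∫ z, normSqV (gradD φ z) ∂μ)) :
    ∃ w : Zsp p q → Vsp p q,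
      Integrable (fun z => Real.sqrt (normSqV (w z))) μ ∧
      (∀ φ : Zsp p q → E1 p, ContDiff ℝ 1 φ → ∫ z, pairV (gradD φ z) (w z) ∂μ = Λ φ) ∧
      (∀ (a : Zsp p q → ℝ) (b : Zsp p q → Vsp p q), Continuous a →
        (∀ α, Continuous fun z => b z α) → (∀ z, a z + normSqV (b z) / 2 ≤ 0) →
        ∫ z, a z ∂μ + ∫ z, pairV (b z) (w z) ∂μ ≤ C) := by
  classical
  set S : Set (Zsp p q) := Ωs ×ˢ Ds with hSdef
  have hScomp : IsCompact S := hΩ.prod hD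
  -- the submodule of C¹ functions
  let CD : Submodule ℝ (Zsp p q → E1 p) :=
    { carrier := {φ | ContDiff ℝ 1 φ}
      add_mem' := by
        intro a b ha hb
        simp only [Set.mem_setOf_eq] at *
        exact ha.add hb
      zero_mem' := by
        simp only [Set.mem_setOf_eq]
        exact contDiff_const
      smul_mem' := by
        intro c f hf
        simp only [Set.mem_setOf_eq] at *
        exact hf.const_smul c }
  have hmemF : ∀ φ : CD, MemLp (fun z => flatV (gradD (φ : Zsp p q → E1 p) z)) 2 μ :=
    fun φ => memℒp_flat hScomp hconc (gradD_continuous φ.2)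
  -- the gradient map into L²
  let M : CD →ₗ[ℝ] Lp (EV p q) 2 μ :=
    { toFun := fun φ => (hmemF φ).toLp _
      map_add' := by
        intro φ ψ
        have hfun : (fun z => flatV (gradD ((φ + ψ : CD) : Zsp p q → E1 p) z))
            = (fun z => flatV (gradD (φ : Zsp p q → E1 p) z))
              + fun z => flatV (gradD (ψ : Zsp p q → E1 p) z) := by
          funext z
          show flatV (gradD ((φ : Zsp p q → E1 p) + (ψ : Zsp p q → E1 p)) z) = _
          rw [gradD_add φ.2 ψ.2]
          rfl
        simp only [hfun]
        exact MemLp.toLp_add _ _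
      map_smul' := by
        intro c φ
        have hfun : (fun z => flatV (gradD ((c • φ : CD) : Zsp p q → E1 p) z))
            = c • fun z => flatV (gradD (φ : Zsp p q → E1 p) z) := by
          funext z
          show flatV (gradD (c • (φ : Zsp p q → E1 p)) z) = _
          rw [gradD_smul φ.2]
          rfl
        simp only [hfun]
        exact MemLp.toLp_const_smul _ _ }
  have hMnorm : ∀ φ : CD, ‖M φ‖ ^ 2 = ∫ z, normSqV (gradD (φ : Zsp p q → E1 p) z) ∂μ :=
    fun φ => norm_toLp_flat_sq (hmemF φ)
  -- the linear functional
  let Λl : CD →ₗ[ℝ] ℝ :=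
    { toFun := fun φ => Λ φ
      map_add' := fun φ ψ => hadd _ _ φ.2 ψ.2
      map_smul' := fun c φ => hsmul c _ φ.2 }
  have hkey : ∀ φ : CD, |Λl φ| ≤ Real.sqrt (2 * C) * ‖M φ‖ := by
    intro φ
    have h1 := hbound φ φ.2
    have h2 : Real.sqrt (2 * C * ∫ z, normSqV (gradD (φ : Zsp p q → E1 p) z) ∂μ)
        = Real.sqrt (2 * C) * ‖M φ‖ := by
      rw [← hMnorm φ, Real.sqrt_mul (by positivity), Real.sqrt_sq (norm_nonneg _)]
    rw [← h2]
    exact h1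
  have hker : LinearMap.ker M ≤ LinearMap.ker Λl := by
    intro φ hφ
    rw [LinearMap.mem_ker] at hφ ⊢
    have := hkey φ
    rw [hφ, norm_zero, mul_zero] at this
    exact abs_eq_zero.mp (le_antisymm this (abs_nonneg _))
  -- factor through the range
  let gl : LinearMap.range M →ₗ[ℝ] ℝ :=
    ((LinearMap.ker M).liftQ Λl hker).comp (LinearMap.quotKerEquivRange M).symm.toLinearMap
  have hgl : ∀ φ : CD, gl ⟨M φ, LinearMap.mem_range_self M φ⟩ = Λl φ := by
    intro φ
    have h1 : (LinearMap.quotKerEquivRange M).symm ⟨M φ, LinearMap.mem_range_self M φ⟩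
        = Submodule.Quotient.mk φ := by
      apply (LinearMap.quotKerEquivRange M).injective
      rw [LinearEquiv.apply_symm_apply]
      ext
      rw [LinearMap.quotKerEquivRange_apply_mk]
    show ((LinearMap.ker M).liftQ Λl hker)
        ((LinearMap.quotKerEquivRange M).symm ⟨M φ, LinearMap.mem_range_self M φ⟩) = Λl φ
    rw [h1, Submodule.liftQ_apply]
  have hglb : ∀ x : LinearMap.range M, ‖gl x‖ ≤ Real.sqrt (2 * C) * ‖x‖ := by
    rintro ⟨v, φ, rfl⟩
    have := hgl φ
    rw [show (⟨M φ, LinearMap.mem_range_self M φ⟩ : LinearMap.range M)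
        = ⟨M φ, ⟨φ, rfl⟩⟩ from rfl] at this
    rw [this]
    exact hkey φ
  let gc : LinearMap.range M →L[ℝ] ℝ := gl.mkContinuous (Real.sqrt (2 * C)) hglb
  obtain ⟨Fc, hFc1, hFc2⟩ := exists_extension_norm_eq (LinearMap.range M) gc
  have hFcnorm : ‖Fc‖ ≤ Real.sqrt (2 * C) := by
    rw [hFc2]
    exact LinearMap.mkContinuous_norm_le gl (Real.sqrt_nonneg _) hglb
  set u : Lp (EV p q) 2 μ := (InnerProductSpace.toDual ℝ (Lp (EV p q) 2 μ)).symm Fc with hu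
  have hu_inner : ∀ x : Lp (EV p q) 2 μ, ⟪u, x⟫ = Fc x :=
    fun x => InnerProductSpace.toDual_symm_apply
  have hu_norm : ‖u‖ ≤ Real.sqrt (2 * C) := by
    rw [hu, LinearIsometryEquiv.norm_map]
    exact hFcnorm
  -- the witness field
  refine ⟨fun z => unflatV ((↑↑u : Zsp p q → EV p q) z), ?_, ?_, ?_⟩
  · -- integrability of the norm
    have h1 : MemLp (↑↑u : Zsp p q → EV p q) 2 μ := Lp.memLp u
    have h2 : Integrable (↑↑u : Zsp p q → EV p q) μ :=
      h1.integrable (by norm_num)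
    refine h2.norm.congr (Filter.Eventually.of_forall fun z => ?_)
    show ‖(↑↑u : Zsp p q → EV p q) z‖
        = Real.sqrt (normSqV (unflatV ((↑↑u : Zsp p q → EV p q) z)))
    rw [sqrt_normSq_unflat]
  · -- the pairing identity
    intro φ hφ
    have hmem : MemLp (fun z => flatV (gradD φ z)) 2 μ := hmemF ⟨φ, hφ⟩
    have e1 : ∫ z, pairV (gradD φ z) (unflatV ((↑↑u : Zsp p q → EV p q) z)) ∂μ
        = ∫ z, ⟪(↑↑(M ⟨φ, hφ⟩) : Zsp p q → EV p q) z, (↑↑u : Zsp p q → EV p q) z⟫ ∂μ := by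
      refine integral_congr_ae ?_
      filter_upwards [hmem.coeFn_toLp] with z hz
      rw [pair_unflat]
      show ⟪flatV (gradD φ z), (↑↑u : Zsp p q → EV p q) z⟫ = _
      congr 1
      exact hz.symm
    rw [e1, ← L2.inner_def, real_inner_comm, hu_inner, hFc1 ⟨M ⟨φ, hφ⟩, LinearMap.mem_range_self M _⟩]
    show gc _ = Λ φ
    show gl _ = Λ φ
    exact hgl ⟨φ, hφ⟩
  · -- the energy bound
    intro a b ha hb hcon
    have hainteg : Integrable a μ := integrable_of_cont_conc hScomp hconc ha
    have hninteg : Integrable (fun z => normSqV (b z)) μ :=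
      integrable_of_cont_conc hScomp hconc (normSqV_continuous hb)
    have hmb : MemLp (fun z => flatV (b z)) 2 μ := memℒp_flat hScomp hconc hb
    have e1 : ∫ z, pairV (b z) (unflatV ((↑↑u : Zsp p q → EV p q) z)) ∂μ
        = ⟪hmb.toLp _, u⟫ := by
      rw [L2.inner_def]
      refine integral_congr_ae ?_
      filter_upwards [hmb.coeFn_toLp] with z hz
      rw [pair_unflat]
      show ⟪flatV (b z), (↑↑u : Zsp p q → EV p q) z⟫ = _
      congr 1
      exact hz.symm
    have hY : (0:ℝ) ≤ ∫ z, normSqV (b z) ∂μ := integral_nonneg fun z => normSqV_nonneg _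
    have e2 : ⟪hmb.toLp _, u⟫ ≤ Real.sqrt (∫ z, normSqV (b z) ∂μ) * Real.sqrt (2 * C) := by
      calc ⟪hmb.toLp _, u⟫ ≤ ‖hmb.toLp _‖ * ‖u‖ := real_inner_le_norm _ _
        _ ≤ Real.sqrt (∫ z, normSqV (b z) ∂μ) * Real.sqrt (2 * C) := by
            refine mul_le_mul ?_ hu_norm (norm_nonneg _) (Real.sqrt_nonneg _)
            have := norm_toLp_flat_sq hmb
            rw [← this, Real.sqrt_sq (norm_nonneg _)]
    have e3 : ∫ z, a z ∂μ ≤ - (∫ z, normSqV (b z) ∂μ) / 2 := by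
      have hgint : Integrable (fun z => - normSqV (b z) / 2) μ :=
        (hninteg.div_const 2).neg.congr (Filter.Eventually.of_forall fun z => by
          show -(normSqV (b z) / 2) = - normSqV (b z) / 2
          ring)
      have h5 : ∫ z, a z ∂μ ≤ ∫ z, (- normSqV (b z) / 2) ∂μ := by
        refine integral_mono hainteg hgint fun z => ?_
        have := hcon z
        show a z ≤ - normSqV (b z) / 2
        linarith
      have h6 : ∫ z, (- normSqV (b z) / 2) ∂μ = - (∫ z, normSqV (b z) ∂μ) / 2 := by
        rw [show (fun z => - normSqV (b z) / 2) = fun z => (-(1:ℝ)/2) * normSqV (b z) by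
          funext z; ring]
        rw [MeasureTheory.integral_const_mul]
        ring
      linarith
    have e4 : Real.sqrt (∫ z, normSqV (b z) ∂μ) * Real.sqrt (2 * C)
        ≤ (∫ z, normSqV (b z) ∂μ) / 2 + C := by
      nlinarith [sq_nonneg (Real.sqrt (∫ z, normSqV (b z) ∂μ) - Real.sqrt (2 * C)),
        Real.sq_sqrt hY, Real.sq_sqrt (by positivity : (0:ℝ) ≤ 2 * C),
        Real.sqrt_nonneg (∫ z, normSqV (b z) ∂μ), Real.sqrt_nonneg (2 * C)]
    calc ∫ z, a z ∂μ + ∫ z, pairV (b z) (unflatV ((↑↑u : Zsp p q → EV p q) z)) ∂μ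
        ≤ - (∫ z, normSqV (b z) ∂μ) / 2
          + Real.sqrt (∫ z, normSqV (b z) ∂μ) * Real.sqrt (2 * C) := by
          rw [e1]
          exact add_le_add e3 e2
      _ ≤ C := by linarith

end Hilbert

section PolyCalc

variable {p q : ℕ}

def coordCLM (s : Fin p ⊕ Fin q) : Zsp p q →L[ℝ] ℝ :=
  Sum.elim (fun i => (EuclideanSpace.proj i).comp (ContinuousLinearMap.fst ℝ (E1 p) (E2 q)))
           (fun j => (EuclideanSpace.proj j).comp (ContinuousLinearMap.snd ℝ (E1 p) (E2 q))) s

def polyF (P : MvPolynomial (Fin p ⊕ Fin q) ℝ) : Zsp p q → ℝ :=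
  fun z => MvPolynomial.aeval (fun s => coordCLM s z) P

lemma polyF_C (a : ℝ) : polyF (p := p) (q := q) (MvPolynomial.C a) = fun _ => a := by
  funext z
  simp [polyF]

lemma polyF_zero : polyF (p := p) (q := q) 0 = fun _ => 0 := by
  funext z
  simp [polyF]

lemma polyF_add (P Q : MvPolynomial (Fin p ⊕ Fin q) ℝ) :
    polyF (P + Q) = fun z => polyF P z + polyF Q z := by
  funext z
  simp [polyF]

lemma polyF_mul_X (P : MvPolynomial (Fin p ⊕ Fin q) ℝ) (s : Fin p ⊕ Fin q) :
    polyF (P * MvPolynomial.X s) = fun z => polyF P z * coordCLM s z := by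
  funext z
  simp [polyF]

lemma polyF_contDiff (P : MvPolynomial (Fin p ⊕ Fin q) ℝ) : ContDiff ℝ 1 (polyF P) := by
  induction P using MvPolynomial.induction_on with
  | C a =>
    rw [polyF_C]
    exact contDiff_const
  | add P Q hP hQ =>
    rw [polyF_add]
    exact hP.add hQ
  | mul_X P s hP =>
    rw [polyF_mul_X]
    exact hP.mul (coordCLM s).contDiff

lemma polyF_continuous (P : MvPolynomial (Fin p ⊕ Fin q) ℝ) : Continuous (polyF P) :=
  (polyF_contDiff P).continuous

def polyD (P : MvPolynomial (Fin p ⊕ Fin q) ℝ) (z : Zsp p q) : Zsp p q →L[ℝ] ℝ :=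
  ∑ s, polyF (MvPolynomial.pderiv s P) z • coordCLM s

lemma polyF_hasFDerivAt (P : MvPolynomial (Fin p ⊕ Fin q) ℝ) :
    ∀ z, HasFDerivAt (polyF P) (polyD P z) z := by
  induction P using MvPolynomial.induction_on with
  | C a =>
    intro z
    have h1 : polyD (p := p) (q := q) (MvPolynomial.C a) z = 0 := by
      rw [polyD]
      refine Finset.sum_eq_zero fun s _ => ?_
      rw [MvPolynomial.pderiv_C]
      rw [show polyF (p := p) (q := q) 0 z = 0 by rw [polyF_zero]]
      simp
    rw [polyF_C, h1]
    exact hasFDerivAt_const a z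
  | add P Q hP hQ =>
    intro z
    have hD : polyD (P + Q) z = polyD P z + polyD Q z := by
      rw [polyD, polyD, polyD, ← Finset.sum_add_distrib]
      refine Finset.sum_congr rfl fun s _ => ?_
      rw [map_add, polyF_add, add_smul]
    rw [polyF_add, hD]
    exact (hP z).add (hQ z)
  | mul_X P s hP =>
    intro z
    classical
    have hX : HasFDerivAt (fun y : Zsp p q => coordCLM s y) (coordCLM s) z :=
      (coordCLM s).hasFDerivAt
    have hmul := (hP z).mul hX
    have hD : polyD (P * MvPolynomial.X s) z
        = polyF P z • coordCLM s + coordCLM s z • polyD P z := by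
      rw [polyD]
      have e1 : ∀ t, polyF (MvPolynomial.pderiv t (P * MvPolynomial.X s)) z
          = polyF (MvPolynomial.pderiv t P) z * coordCLM s z
            + polyF P z * (if t = s then 1 else 0) := by
        intro t
        rw [MvPolynomial.pderiv_mul, polyF_add, polyF_mul_X]
        dsimp only
        congr 1
        rcases eq_or_ne t s with h | h
        · subst h
          rw [MvPolynomial.pderiv_X_self, if_pos rfl, mul_one, mul_one]
        · rw [MvPolynomial.pderiv_X_of_ne (Ne.symm h), if_neg h, mul_zero, mul_zero,
            polyF_zero]
      calc (∑ t, polyF (MvPolynomial.pderiv t (P * MvPolynomial.X s)) z • coordCLM t)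
          = ∑ t, ((polyF (MvPolynomial.pderiv t P) z * coordCLM s z) • coordCLM t
              + (polyF P z * (if t = s then 1 else 0)) • coordCLM t) := by
            refine Finset.sum_congr rfl fun t _ => ?_
            rw [e1 t, add_smul]
        _ = coordCLM s z • polyD P z + polyF P z • coordCLM s := by
            rw [Finset.sum_add_distrib]
            congr 1
            · rw [polyD, Finset.smul_sum]
              refine Finset.sum_congr rfl fun t _ => ?_
              rw [smul_smul, mul_comm]
            · rw [show (fun t => (polyF P z * (if t = s then 1 else 0)) • coordCLM t)
                  = fun t => if t = s then polyF P z • coordCLM t else 0 by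
                funext t
                rcases eq_or_ne t s with h | h
                · rw [if_pos h, if_pos h, mul_one]
                · rw [if_neg h, if_neg h, mul_zero, zero_smul]]
              rw [Finset.sum_ite_eq' Finset.univ s (fun t => polyF P z • coordCLM t)]
              simp
        _ = polyF P z • coordCLM s + coordCLM s z • polyD P z := by rw [add_comm]
    rw [polyF_mul_X, hD]
    exact hmul

end PolyCalc

section SWTransfer

open MvPolynomial

variable {p q : ℕ}

lemma exists_antideriv (hp : 0 < p) (P : MvPolynomial (Fin p ⊕ Fin q) ℝ) :
    ∃ P' : MvPolynomial (Fin p ⊕ Fin q) ℝ,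
      MvPolynomial.pderiv (Sum.inl (⟨0, hp⟩ : Fin p)) P' = P := by
  classical
  set s₀ : Fin p ⊕ Fin q := Sum.inl (⟨0, hp⟩ : Fin p)
  induction P using MvPolynomial.induction_on' with
  | monomial d a =>
    refine ⟨monomial (d + Finsupp.single s₀ 1) (a / (d s₀ + 1)), ?_⟩
    rw [pderiv_monomial]
    have h1 : (d + Finsupp.single s₀ 1) - Finsupp.single s₀ 1 = d := add_tsub_cancel_right _ _
    have h2 : ((d + Finsupp.single s₀ 1 : (Fin p ⊕ Fin q) →₀ ℕ)) s₀ = d s₀ + 1 := by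
      rw [Finsupp.add_apply, Finsupp.single_eq_same]
    rw [show (fun₀ | s₀ => 1 : (Fin p ⊕ Fin q) →₀ ℕ) = Finsupp.single s₀ 1 from rfl, h1, h2]
    congr 1
    have h3 : ((d s₀ : ℝ) + 1) ≠ 0 := by positivity
    push_cast
    field_simp
  | add P Q hP hQ =>
    obtain ⟨P', hP'⟩ := hP
    obtain ⟨Q', hQ'⟩ := hQ
    exact ⟨P' + Q', by rw [map_add, hP', hQ']⟩

lemma div_realize (hp : 0 < p) (P : MvPolynomial (Fin p ⊕ Fin q) ℝ) :
    ∃ χ : Zsp p q → E1 p, ContDiff ℝ 1 χ ∧ ∀ z, divOmega χ z = polyF P z := by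
  classical
  obtain ⟨P', hP'⟩ := exists_antideriv hp P
  set i0 : Fin p := ⟨0, hp⟩
  set L0 : ℝ →L[ℝ] E1 p :=
    (ContinuousLinearMap.id ℝ ℝ).smulRight (EuclideanSpace.single i0 (1:ℝ)) with hL0
  refine ⟨fun z => L0 (polyF P' z), (L0.contDiff).comp (polyF_contDiff P'), ?_⟩
  intro z
  have hder : HasFDerivAt (fun z : Zsp p q => L0 (polyF P' z)) (L0.comp (polyD P' z)) z :=
    L0.hasFDerivAt.comp z (polyF_hasFDerivAt P' z)
  have hfd : fderiv ℝ (fun z : Zsp p q => L0 (polyF P' z)) z = L0.comp (polyD P' z) :=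
    hder.fderiv
  rw [divOmega]
  have hterm : ∀ α : Fin p,
      fderiv ℝ (fun z : Zsp p q => L0 (polyF P' z)) z
        ((EuclideanSpace.single α (1:ℝ), 0)) α
      = polyD P' z ((EuclideanSpace.single α (1:ℝ), 0)) * (if α = i0 then 1 else 0) := by
    intro α
    rw [hfd]
    rw [ContinuousLinearMap.comp_apply, hL0, ContinuousLinearMap.smulRight_apply,
      ContinuousLinearMap.id_apply]
    rw [PiLp.smul_apply, EuclideanSpace.single_apply, smul_eq_mul]
  calc (∑ α, fderiv ℝ (fun z : Zsp p q => L0 (polyF P' z)) z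
        ((EuclideanSpace.single α (1:ℝ), 0)) α)
      = ∑ α, (if α = i0 then
          polyD P' z ((EuclideanSpace.single α (1:ℝ), 0)) else 0) := by
        refine Finset.sum_congr rfl fun α _ => ?_
        rw [hterm α]
        rcases eq_or_ne α i0 with h | h
        · rw [if_pos h, if_pos h, mul_one]
        · rw [if_neg h, if_neg h, mul_zero]
    _ = polyD P' z ((EuclideanSpace.single i0 (1:ℝ), 0)) := by
        rw [Finset.sum_ite_eq' Finset.univ i0
          (fun α => polyD P' z ((EuclideanSpace.single α (1:ℝ), 0)))]
        simp
    _ = polyF P z := by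
        rw [polyD]
        rw [ContinuousLinearMap.sum_apply]
        have hterm2 : ∀ s : Fin p ⊕ Fin q,
            (polyF (MvPolynomial.pderiv s P') z • coordCLM s)
              ((EuclideanSpace.single i0 (1:ℝ), 0) : Zsp p q)
            = polyF (MvPolynomial.pderiv s P') z
              * (coordCLM s ((EuclideanSpace.single i0 (1:ℝ), 0) : Zsp p q)) := by
          intro s
          rw [ContinuousLinearMap.smul_apply, smul_eq_mul]
        simp only [hterm2]
        rw [Fintype.sum_sum_type]
        have hinr : ∀ j : Fin q,
            coordCLM (Sum.inr j : Fin p ⊕ Fin q)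
              ((EuclideanSpace.single i0 (1:ℝ), 0) : Zsp p q) = 0 := by
          intro j
          simp [coordCLM]
        have hinl : ∀ i : Fin p,
            coordCLM (Sum.inl i : Fin p ⊕ Fin q)
              ((EuclideanSpace.single i0 (1:ℝ), 0) : Zsp p q)
            = (if i = i0 then 1 else 0) := by
          intro i
          simp [coordCLM, EuclideanSpace.single_apply]
        simp only [hinr, hinl, mul_zero, mul_ite, mul_one]
        rw [Finset.sum_const_zero, add_zero]
        rw [Finset.sum_ite_eq' Finset.univ i0
          (fun i => polyF (MvPolynomial.pderiv (Sum.inl i) P') z)]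
        simp only [Finset.mem_univ, if_pos]
        rw [hP']

lemma integral_eq_of_div_eq (hp : 0 < p)
    {Ωs : Set (E1 p)} {Ds : Set (E2 q)} (hΩ : IsCompact Ωs) (hD : IsCompact Ds)
    (ν ν' : Measure (Zsp p q)) [IsProbabilityMeasure ν] [IsProbabilityMeasure ν']
    (hconc : ν ((Ωs ×ˢ Ds)ᶜ) = 0) (hconc' : ν' ((Ωs ×ˢ Ds)ᶜ) = 0)
    (hdiv : ∀ χ : Zsp p q → E1 p, ContDiff ℝ 1 χ →
      ∫ z, divOmega χ z ∂ν = ∫ z, divOmega χ z ∂ν')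
    {f : Zsp p q → ℝ} (hf : Continuous f) : ∫ z, f z ∂ν = ∫ z, f z ∂ν' := by
  classical
  have hpoly : ∀ P : MvPolynomial (Fin p ⊕ Fin q) ℝ,
      ∫ z, polyF P z ∂ν = ∫ z, polyF P z ∂ν' := by
    intro P
    obtain ⟨χ, hχ, hχdiv⟩ := div_realize hp P
    have h1 := hdiv χ hχ
    have e : ∀ m : Measure (Zsp p q), ∫ z, divOmega χ z ∂m = ∫ z, polyF P z ∂m := fun m =>
      integral_congr_ae (Filter.Eventually.of_forall fun z => hχdiv z)
    rw [e ν, e ν'] at h1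
    exact h1
  set K : Set (Zsp p q) := Ωs ×ˢ Ds with hK
  have hKcomp : IsCompact K := hΩ.prod hD
  rcases K.eq_empty_or_nonempty with hKe | hKne
  · exfalso
    have h2 := hconc
    rw [show K = (∅ : Set (Zsp p q)) from hKe, Set.compl_empty] at h2
    rw [measure_univ] at h2
    exact one_ne_zero h2
  haveI : CompactSpace ↥K := isCompact_iff_compactSpace.mp hKcomp
  set cf : (Fin p ⊕ Fin q) → C(↥K, ℝ) := fun s =>
    ⟨fun x => coordCLM s (x : Zsp p q), (coordCLM s).continuous.comp continuous_subtype_val⟩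
    with hcf
  set Ψ : MvPolynomial (Fin p ⊕ Fin q) ℝ →ₐ[ℝ] C(↥K, ℝ) := MvPolynomial.aeval cf with hΨ
  have hΨeval : ∀ (Q : MvPolynomial (Fin p ⊕ Fin q) ℝ) (x : ↥K),
      (Ψ Q) x = polyF Q (x : Zsp p q) := by
    intro Q x
    have h1 : (ContinuousMap.evalAlgHom ℝ ℝ x) (Ψ Q)
        = MvPolynomial.aeval (fun s => (ContinuousMap.evalAlgHom ℝ ℝ x) (cf s)) Q :=
      MvPolynomial.comp_aeval_apply (f := cf) (ContinuousMap.evalAlgHom ℝ ℝ x) Q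
    exact h1
  have hsep : (Ψ.range).SeparatesPoints := by
    intro x y hxy
    have hne : (x : Zsp p q) ≠ (y : Zsp p q) := fun h => hxy (Subtype.ext h)
    obtain ⟨s, hs⟩ : ∃ s, coordCLM s (x : Zsp p q) ≠ coordCLM s (y : Zsp p q) := by
      by_contra hcon
      push_neg at hcon
      apply hne
      have h1 : (x : Zsp p q).1 = (y : Zsp p q).1 := by
        ext i
        exact hcon (Sum.inl i)
      have h2 : (x : Zsp p q).2 = (y : Zsp p q).2 := by
        ext j
        exact hcon (Sum.inr j)
      exact Prod.ext h1 h2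
    refine ⟨Ψ (MvPolynomial.X s), ⟨Ψ (MvPolynomial.X s), ⟨MvPolynomial.X s, rfl⟩, rfl⟩, ?_⟩
    rw [hΨeval, hΨeval]
    simpa [polyF] using hs
  have hint : ∀ (g : Zsp p q → ℝ), Continuous g → Integrable g ν ∧ Integrable g ν' :=
    fun g hg => ⟨integrable_of_cont_conc hKcomp hconc hg,
      integrable_of_cont_conc hKcomp hconc' hg⟩
  have key : ∀ ε : ℝ, 0 < ε → |∫ z, f z ∂ν - ∫ z, f z ∂ν'| ≤ 2 * ε := by
    intro ε hε
    obtain ⟨g, hg⟩ := ContinuousMap.exists_mem_subalgebra_near_continuous_of_separatesPoints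
      Ψ.range hsep (fun x : ↥K => f (x : Zsp p q)) (hf.comp continuous_subtype_val) ε hε
    obtain ⟨Q, hQ⟩ := g.2
    have hptw : ∀ z ∈ K, |polyF Q z - f z| ≤ ε := by
      intro z hz
      have := hg ⟨z, hz⟩
      rw [show ((g : C(↥K, ℝ)) : ↥K → ℝ) ⟨z, hz⟩ = polyF Q z by
        rw [← hQ]; exact hΨeval Q ⟨z, hz⟩] at this
      rw [Real.norm_eq_abs] at this
      exact le_of_lt this
    have hone : ∀ (m : Measure (Zsp p q)), IsProbabilityMeasure m → m ((Ωs ×ˢ Ds)ᶜ) = 0 →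
        |∫ z, polyF Q z ∂m - ∫ z, f z ∂m| ≤ ε := by
      intro m hm hmc
      haveI := hm
      have hi1 : Integrable (polyF Q) m :=
        integrable_of_cont_conc hKcomp hmc (polyF_continuous Q)
      have hi2 : Integrable f m := integrable_of_cont_conc hKcomp hmc hf
      rw [← integral_sub hi1 hi2]
      calc |∫ z, (polyF Q z - f z) ∂m| ≤ ∫ z, |polyF Q z - f z| ∂m := by
            have := norm_integral_le_integral_norm (μ := m) (fun z => polyF Q z - f z)
            simpa [Real.norm_eq_abs] using this
        _ ≤ ∫ _z, ε ∂m := by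
            refine integral_mono_ae (hi1.sub hi2).abs (integrable_const ε) ?_
            filter_upwards [ae_mem_of_conc hmc] with z hz
            exact hptw z hz
        _ = ε := by
            rw [integral_const]
            simp
    have h1 := hone ν inferInstance hconc
    have h2 := hone ν' inferInstance hconc'
    have h3 := hpoly Q
    calc |∫ z, f z ∂ν - ∫ z, f z ∂ν'|
        ≤ |∫ z, f z ∂ν - ∫ z, polyF Q z ∂ν|
          + |∫ z, polyF Q z ∂ν' - ∫ z, f z ∂ν'| := by
          rw [show ∫ z, f z ∂ν - ∫ z, f z ∂ν'
              = (∫ z, f z ∂ν - ∫ z, polyF Q z ∂ν)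
                + (∫ z, polyF Q z ∂ν' - ∫ z, f z ∂ν') by rw [h3]; ring]
          exact abs_add_le _ _
      _ ≤ 2 * ε := by
          rw [abs_sub_comm (∫ z, f z ∂ν)] at *
          linarith [h1, h2]
  by_contra hne
  have hd : 0 < |∫ z, f z ∂ν - ∫ z, f z ∂ν'| := by
    rw [abs_pos, sub_ne_zero]
    exact hne
  have := key (|∫ z, f z ∂ν - ∫ z, f z ∂ν'| / 4) (by linarith)
  linarith

end SWTransfer

/-- Closedness of boundary-value-constrained sublevel sets of the Dirichlet energy:
if each `μ_n` has the same boundary term as `μ_b` and Dirichlet energy at most `C`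
(witnessed by an admissible momentum), and `μ_n → μ` weakly, then so does `μ`. -/
theorem dirichlet_sublevel_weakly_closed (p q : ℕ)
    (Ωs : Set (E1 p)) (Ds : Set (E2 q))
    (hΩ : IsCompact Ωs) (hΩvol : volume Ωs = 1)
    (hD : IsCompact Ds) (hDconv : Convex ℝ Ds)
    (μb σb : Measure (Zsp p q)) (wb : Zsp p q → Vsp p q)
    (hμb : RepMap Ωs Ds μb) (hmb : Momentum Ωs Ds σb wb)
    (hceb : ContEq Ωs μb σb wb) (hfb : BddAbove (dualSet μb σb wb))
    (C : ℝ)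
    (μseq : ℕ → Measure (Zsp p q)) (μ : Measure (Zsp p q))
    (hrep : ∀ n, RepMap Ωs Ds (μseq n)) (hμrep : RepMap Ωs Ds μ)
    (hmem : ∀ n, ∃ σ : Measure (Zsp p q), ∃ w : Zsp p q → Vsp p q,
      Momentum Ωs Ds σ w ∧ ContEq Ωs (μseq n) σ w ∧
        SameBT (μseq n) σ w μb σb wb ∧ BddAbove (dualSet (μseq n) σ w) ∧
        DirME (μseq n) σ w ≤ C)
    (hweakconv : ∀ g : BoundedContinuousFunction (Zsp p q) ℝ,
      Filter.Tendsto (fun n => ∫ z, g z ∂(μseq n)) Filter.atTop (nhds (∫ z, g z ∂μ))) :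
    ∃ σ : Measure (Zsp p q), ∃ w : Zsp p q → Vsp p q,
      Momentum Ωs Ds σ w ∧ ContEq Ωs μ σ w ∧ SameBT μ σ w μb σb wb ∧
        BddAbove (dualSet μ σ w) ∧ DirME μ σ w ≤ C := by
  classical
  choose σs ws hmom hce hsb hbdd hdir using hmem
  set K : Set (Zsp p q) := Ωs ×ˢ Ds with hKdef
  have hKcomp : IsCompact K := hΩ.prod hD
  have hconcn : ∀ n, (μseq n) Kᶜ = 0 := fun n => (hrep n).conc hΩ
  have hconcμ : μ Kᶜ = 0 := hμrep.conc hΩ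
  have hconcb : μb Kᶜ = 0 := hμb.conc hΩ
  haveI hμprob : IsProbabilityMeasure μ := hμrep.1
  have hC : 0 ≤ C := le_trans (DirME_nonneg (hbdd 0)) (hdir 0)
  have hdivlim : ∀ {χ : Zsp p q → E1 p}, ContDiff ℝ 1 χ →
      Filter.Tendsto (fun n => ∫ z, divOmega χ z ∂(μseq n)) Filter.atTop
        (nhds (∫ z, divOmega χ z ∂μ)) :=
    fun hχ => tendsto_integral_of_weak hKcomp μseq μ hconcn hconcμ hweakconv
      (divOmega_continuous hχ)
  set BTb : (Zsp p q → E1 p) → ℝ :=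
    fun χ => ∫ z, divOmega χ z ∂μb + ∫ z, pairV (gradD χ z) (wb z) ∂σb with hBTbdef
  -- the three per-n classes
  set PH : ℕ → Prop := fun n => ∀ (α : Fin p) (i : Fin q),
    Integrable (fun z => ws n z α i) (σs n) with hPHdef
  set PA : ℕ → Prop := fun n => ∀ χ : Zsp p q → E1 p, ContDiff ℝ 1 χ →
    ∫ z, divOmega χ z ∂(μseq n) = BTb χ with hPAdef
  set PB : ℕ → Prop := fun n => ∀ χ : Zsp p q → E1 p, ContDiff ℝ 1 χ →
    ∫ z, divOmega χ z ∂(μseq n) = ∫ z, divOmega χ z ∂μb with hPBdef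
  have htri : ∀ n, PH n ∨ PA n ∨ PB n := fun n => trichotomy (hsb n)
  by_cases hfA : ∃ᶠ n in Filter.atTop, PA n
  · -- Case I : the boundary term functional is trivial in the limit
    have hlim : ∀ χ : Zsp p q → E1 p, ContDiff ℝ 1 χ → ∫ z, divOmega χ z ∂μ = BTb χ := by
      intro χ hχ
      have hfreq : ∃ᶠ n in Filter.atTop,
          (fun n => ∫ z, divOmega χ z ∂(μseq n)) n = BTb χ :=
        hfA.mono fun n hn => hn χ hχ
      exact (eq_of_tendsto_of_frequently (hdivlim hχ) hfreq).symm
    refine ⟨μ, fun _ => 0, ⟨(by infer_instance : IsFiniteMeasure μ), ?_, ?_⟩, ?_, ?_, ?_, ?_⟩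
    · rw [← compl_prod_eq]
      exact hconcμ
    · refine (integrable_const (0:ℝ)).congr (Filter.Eventually.of_forall fun z => ?_)
      simp [normSqV]
    · intro φ hφ
      have h0 : ∫ z, pairV (gradD φ z) ((fun _ => (0 : Vsp p q)) z) ∂μ = 0 := by
        simp
      rw [h0, add_zero, hlim φ hφ.1]
      exact hceb φ hφ
    · intro χ hχ
      have h0 : ∫ z, pairV (gradD χ z) ((fun _ => (0 : Vsp p q)) z) ∂μ = 0 := by
        simp
      rw [h0, add_zero]
      exact hlim χ hχ
    · refine ⟨C, fun r hr => ?_⟩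
      obtain ⟨a, b, ha, hb, hcon, rfl⟩ := hr
      have h0 : ∫ z, pairV (b z) ((fun _ => (0 : Vsp p q)) z) ∂μ = 0 := by
        simp
      rw [h0, add_zero]
      refine le_trans (integral_nonpos fun z => ?_) hC
      have h1 := hcon z
      have h2 := normSqV_nonneg (b z)
      show a z ≤ (0 : Zsp p q → ℝ) z
      rw [Pi.zero_apply]
      linarith
    · refine Real.sSup_le (fun r hr => ?_) hC
      obtain ⟨a, b, ha, hb, hcon, rfl⟩ := hr
      have h0 : ∫ z, pairV (b z) ((fun _ => (0 : Vsp p q)) z) ∂μ = 0 := by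
        simp
      rw [h0, add_zero]
      refine le_trans (integral_nonpos fun z => ?_) hC
      have h1 := hcon z
      have h2 := normSqV_nonneg (b z)
      show a z ≤ (0 : Zsp p q → ℝ) z
      rw [Pi.zero_apply]
      linarith
  · by_cases hfB : ∃ᶠ n in Filter.atTop, (PB n ∧ ¬ PH n)
    · -- Case II : the limit has the same div-integrals as some μseq N
      obtain ⟨N, hBN, hnHN⟩ := hfB.exists
      have hp : 0 < p := by
        by_contra hp0
        push_neg at hp0
        apply hnHN
        intro α i
        exact absurd α.pos (by omega)
      have htrans : ∀ χ : Zsp p q → E1 p, ContDiff ℝ 1 χ →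
          ∫ z, divOmega χ z ∂μ = ∫ z, divOmega χ z ∂(μseq N) := by
        intro χ hχ
        have hfreq : ∃ᶠ n in Filter.atTop,
            (fun n => ∫ z, divOmega χ z ∂(μseq n)) n = ∫ z, divOmega χ z ∂μb :=
          hfB.mono fun n hn => hn.1 χ hχ
        have h1 : ∫ z, divOmega χ z ∂μb = ∫ z, divOmega χ z ∂μ :=
          eq_of_tendsto_of_frequently (hdivlim hχ) hfreq
        rw [← h1, hBN χ hχ]
      haveI : IsProbabilityMeasure (μseq N) := (hrep N).1
      have hSW : ∀ f : Zsp p q → ℝ, Continuous f → ∫ z, f z ∂μ = ∫ z, f z ∂(μseq N) :=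
        fun f hf => integral_eq_of_div_eq hp hΩ hD μ (μseq N) hconcμ (hconcn N)
          (fun χ hχ => htrans χ hχ) hf
      have hds : dualSet μ (σs N) (ws N) = dualSet (μseq N) (σs N) (ws N) := by
        ext r
        constructor
        · rintro ⟨a, b, ha, hb, hcon, rfl⟩
          exact ⟨a, b, ha, hb, hcon, by rw [hSW a ha]⟩
        · rintro ⟨a, b, ha, hb, hcon, rfl⟩
          exact ⟨a, b, ha, hb, hcon, by rw [hSW a ha]⟩
      refine ⟨σs N, ws N, hmom N, ?_, ?_, ?_, ?_⟩
      · intro φ hφ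
        rw [hSW _ (divOmega_continuous hφ.1)]
        exact hce N φ hφ
      · intro χ hχ
        rw [hSW _ (divOmega_continuous hχ)]
        exact hsb N χ hχ
      · rw [hds]
        exact hbdd N
      · rw [DirME, hds]
        exact hdir N
    · -- Case III : eventually all momenta are honest; Hilbert construction
      have hevH : ∀ᶠ n in Filter.atTop, PH n := by
        have h1 : ∀ᶠ n in Filter.atTop, ¬ PA n := Filter.not_frequently.mp hfA
        have h2 : ∀ᶠ n in Filter.atTop, ¬ (PB n ∧ ¬ PH n) := Filter.not_frequently.mp hfB
        filter_upwards [h1, h2] with n hn1 hn2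
        rcases htri n with h | h | h
        · exact h
        · exact absurd h hn1
        · by_cases hH : PH n
          · exact hH
          · exact absurd ⟨h, hH⟩ hn2
      set Λ : (Zsp p q → E1 p) → ℝ := fun χ => BTb χ - ∫ z, divOmega χ z ∂μ with hΛdef
      have hXeq : ∀ (n : ℕ) (χ : Zsp p q → E1 p), ContDiff ℝ 1 χ →
          ∫ z, pairV (gradD χ z) (ws n z) ∂(σs n)
            = BTb χ - ∫ z, divOmega χ z ∂(μseq n) := by
        intro n χ hχ
        have h := hsb n χ hχ
        rw [hBTbdef]
        dsimp only
        linarith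
      have hXlim : ∀ (χ : Zsp p q → E1 p), ContDiff ℝ 1 χ →
          Filter.Tendsto (fun n => ∫ z, pairV (gradD χ z) (ws n z) ∂(σs n))
            Filter.atTop (nhds (Λ χ)) := by
        intro χ hχ
        have h1 : Filter.Tendsto (fun n => BTb χ - ∫ z, divOmega χ z ∂(μseq n))
            Filter.atTop (nhds (BTb χ - ∫ z, divOmega χ z ∂μ)) :=
          tendsto_const_nhds.sub (hdivlim hχ)
        refine h1.congr fun n => ?_
        rw [hXeq n χ hχ]
      have hadd : ∀ φ ψ : Zsp p q → E1 p, ContDiff ℝ 1 φ → ContDiff ℝ 1 ψ →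
          Λ (φ + ψ) = Λ φ + Λ ψ := by
        intro φ ψ hφ hψ
        have t1 := hXlim (φ + ψ) (hφ.add hψ)
        have t2 := (hXlim φ hφ).add (hXlim ψ hψ)
        have heq : (fun n => ∫ z, pairV (gradD (φ + ψ) z) (ws n z) ∂(σs n))
            =ᶠ[Filter.atTop] (fun n => ∫ z, pairV (gradD φ z) (ws n z) ∂(σs n)
              + ∫ z, pairV (gradD ψ z) (ws n z) ∂(σs n)) := by
          filter_upwards [hevH] with n hn
          haveI : IsFiniteMeasure (σs n) := (hmom n).1
          exact pair_integral_add_of_H hKcomp ((hmom n).conc) ((hmom n).2.2) hn hφ hψ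
        exact tendsto_nhds_unique t1 (t2.congr' heq.symm)
      have hsmul : ∀ (c : ℝ) (φ : Zsp p q → E1 p), ContDiff ℝ 1 φ → Λ (c • φ) = c * Λ φ := by
        intro c φ hφ
        rw [hΛdef]
        dsimp only
        rw [hBTbdef]
        dsimp only
        rw [div_integral_smul hφ c, div_integral_smul hφ c, pair_integral_smul hφ c]
        ring
      have hbound : ∀ φ : Zsp p q → E1 p, ContDiff ℝ 1 φ →
          |Λ φ| ≤ Real.sqrt (2 * C * ∫ z, normSqV (gradD φ z) ∂μ) := by
        intro φ hφ
        have hbn : ∀ n, |∫ z, pairV (gradD φ z) (ws n z) ∂(σs n)|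
            ≤ Real.sqrt (2 * C * ∫ z, normSqV (gradD φ z) ∂(μseq n)) := by
          intro n
          exact pairing_estimate hC (hbdd n) (hdir n) (gradD_continuous hφ)
        have tY : Filter.Tendsto (fun n => ∫ z, normSqV (gradD φ z) ∂(μseq n))
            Filter.atTop (nhds (∫ z, normSqV (gradD φ z) ∂μ)) :=
          tendsto_integral_of_weak hKcomp μseq μ hconcn hconcμ hweakconv
            (normSqV_continuous (gradD_continuous hφ))
        have tL : Filter.Tendsto (fun n => |∫ z, pairV (gradD φ z) (ws n z) ∂(σs n)|)
            Filter.atTop (nhds (|Λ φ|)) :=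
          (hXlim φ hφ).abs
        have tR : Filter.Tendsto
            (fun n => Real.sqrt (2 * C * ∫ z, normSqV (gradD φ z) ∂(μseq n)))
            Filter.atTop (nhds (Real.sqrt (2 * C * ∫ z, normSqV (gradD φ z) ∂μ))) :=
          (tY.const_mul (2 * C)).sqrt
        exact le_of_tendsto_of_tendsto' tL tR hbn
      obtain ⟨w, hw1, hw2, hw3⟩ :=
        hilbert_witness hΩ hD μ hconcμ C hC Λ hadd hsmul hbound
      refine ⟨μ, w, ⟨(by infer_instance : IsFiniteMeasure μ), ?_, hw1⟩, ?_, ?_, ?_, ?_⟩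
      · rw [← compl_prod_eq]
        exact hconcμ
      · intro φ hφ
        rw [hw2 φ hφ.1]
        have h1 : ∫ z, divOmega φ z ∂μ + Λ φ = BTb φ := by
          rw [hΛdef]
          ring
        rw [h1]
        exact hceb φ hφ
      · intro χ hχ
        rw [hw2 χ hχ]
        rw [hΛdef]
        ring
      · refine ⟨C, fun r hr => ?_⟩
        obtain ⟨a, b, ha, hb, hcon, rfl⟩ := hr
        exact hw3 a b ha hb hcon
      · refine Real.sSup_le (fun r hr => ?_) hC
        obtain ⟨a, b, ha, hb, hcon, rfl⟩ := hr
        exact hw3 a b ha hb hcon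

end
end
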